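/- arXiv:2211.02401 — 6 statements merged into one kernel-verified Lean document; each statement's English description precedes it below -/
import Mathlib

section
/- Let C be a unital C*-algebra, S ⊆ C an operator system (a linear subspace of C closed under adjoints and containing the unit 1), and τ : S → ℂ a state of S, i.e. a linear functional with τ(1) = 1 and τ(y) ≥ 0 whenever y ∈ S is positive in C. Let Ext(τ) denote the set of states ω of C (positive unital linear functionals on C) with ω|_S = τ. Then for every self-adjoint element x ∈ C, sup{Re ω(x) : ω ∈ Ext(τ)} = inf{Re τ(y) : y ∈ S, y self-adjoint, x ≤ y}. -/
open scoped ComplexOrder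

/-- Lemma 2.4: for an operator system `S` in a unital C*-algebra `C`, a state `τ` of `S`, and a
self-adjoint `x ∈ C`,
`sup{Re ω(x) : ω a state of C extending τ} = inf{Re τ(y) : y ∈ S self-adjoint, x ≤ y}`. -/
theorem stmt0 (C : Type*) [CStarAlgebra C] [PartialOrder C] [StarOrderedRing C]
    (S : Submodule ℂ C) (h1S : (1 : C) ∈ S) (hstarS : ∀ x ∈ S, star x ∈ S)
    (τ : S →ₗ[ℂ] ℂ) (hτ1 : τ ⟨1, h1S⟩ = 1)
    (hτpos : ∀ y : S, 0 ≤ (y : C) → 0 ≤ τ y)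
    (x : C) (hx : IsSelfAdjoint x) :
    sSup {r : ℝ | ∃ ω : C →ₗ[ℂ] ℂ, ω 1 = 1 ∧ (∀ z : C, 0 ≤ ω (star z * z)) ∧
        (∀ y : S, ω (y : C) = τ y) ∧ (ω x).re = r} =
    sInf {r : ℝ | ∃ y : S, IsSelfAdjoint (y : C) ∧ x ≤ (y : C) ∧ (τ y).re = r} := by
  set A : Set ℝ := {r : ℝ | ∃ ω : C →ₗ[ℂ] ℂ, ω 1 = 1 ∧ (∀ z : C, 0 ≤ ω (star z * z)) ∧
      (∀ y : S, ω (y : C) = τ y) ∧ (ω x).re = r} with hAdef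

  -- real part
  let reC : C → C := fun a => (2:ℝ)⁻¹ • (a + star a)
  have hreC_sa : ∀ a : C, IsSelfAdjoint (reC a) := by
    intro a
    simp only [reC, IsSelfAdjoint, star_smul, star_trivial, star_add, star_star]
    rw [add_comm]
  have hreC_eq : ∀ a : C, IsSelfAdjoint a → reC a = a := by
    intro a ha
    simp only [reC, ha.star_eq]
    module
  have hreC_add : ∀ a b : C, reC (a + b) = reC a + reC b := by
    intro a b
    simp only [reC, star_add]
    module
  have hreC_smul : ∀ (c : ℝ) (a : C), reC (c • a) = c • reC a := by
    intro c a
    simp only [reC, star_smul, star_trivial]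
    module
  have hreC_neg : ∀ a : C, reC (-a) = - reC a := by
    intro a
    simp only [reC, star_neg]
    module
  have hreC_I : ∀ a : C, IsSelfAdjoint a → reC (Complex.I • a) = 0 := by
    intro a ha
    have h : star (Complex.I • a) = -(Complex.I • a) := by
      rw [star_smul, ha.star_eq, Complex.star_def, Complex.conj_I, neg_smul]
    simp [reC, h]
  -- smul order facts
  have hsmul_nonneg : ∀ (c : ℝ), 0 ≤ c → ∀ d : C, 0 ≤ d → 0 ≤ c • d := by
    intro c hc d hd
    rw [StarOrderedRing.nonneg_iff] at hd
    induction hd using AddSubmonoid.closure_induction with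
    | mem z hz =>
      obtain ⟨w, rfl⟩ := hz
      have h3 : c • (star w * w) = star (Real.sqrt c • w) * (Real.sqrt c • w) := by
        rw [star_smul, smul_mul_smul_comm]
        simp [Real.mul_self_sqrt hc]
      rw [h3]
      exact star_mul_self_nonneg _
    | zero => simp
    | add a b _ _ ha hb =>
      rw [smul_add]
      exact add_nonneg ha hb
  have hsmul_le : ∀ (c : ℝ), 0 ≤ c → ∀ a b : C, a ≤ b → c • a ≤ c • b := by
    intro c hc a b hab
    have := hsmul_nonneg c hc (b - a) (sub_nonneg.mpr hab)
    rw [smul_sub] at this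
    exact sub_nonneg.mp this
  -- coercion of real scalars into S and C
  have hcoe_smul : ∀ (r : ℝ) (s : S), (((r:ℂ) • s : S) : C) = r • (s : C) := by
    intro r s
    rw [Submodule.coe_smul, Complex.coe_smul]
  have halg : ∀ r : ℝ, algebraMap ℝ C r = r • (1 : C) := fun r =>
    Algebra.algebraMap_eq_smul_one r
  -- the element r•1 of S
  let oneS : S := ⟨1, h1S⟩
  let cS : ℝ → S := fun r => (r : ℂ) • oneS
  have hcS_coe : ∀ r : ℝ, ((cS r : S) : C) = r • (1 : C) := fun r => hcoe_smul r oneS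
  have hcS_sa : ∀ r : ℝ, IsSelfAdjoint ((cS r : S) : C) := by
    intro r
    rw [hcS_coe]
    exact .smul (star_trivial r) (IsSelfAdjoint.one (R := C))
  have hcS_τ : ∀ r : ℝ, τ (cS r) = (r : ℂ) := by
    intro r
    show τ ((r:ℂ) • oneS) = r
    rw [map_smul, hτ1, smul_eq_mul, mul_one]
  -- τ is real on selfadjoint elements of S
  have hτreal : ∀ s : S, IsSelfAdjoint (s : C) → (τ s).im = 0 := by
    intro s hs
    have hle : (s : C) ≤ ((cS ‖(s:C)‖ : S) : C) := by
      rw [hcS_coe, ← halg]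
      exact hs.le_algebraMap_norm_self
    have h0 : 0 ≤ τ (cS ‖(s:C)‖ - s) := by
      refine hτpos _ ?_
      rw [Submodule.coe_sub]
      exact sub_nonneg.mpr hle
    have him : (τ (cS ‖(s:C)‖ - s)).im = 0 := by
      have := (Complex.le_def.mp h0).2
      simpa using this.symm
    rw [map_sub, Complex.sub_im, hcS_τ] at him
    simpa using him
  -- monotonicity of re ∘ τ
  have hmono : ∀ s t : S, (s : C) ≤ (t : C) → (τ s).re ≤ (τ t).re := by
    intro s t h
    have h0 : 0 ≤ τ (t - s) := by
      refine hτpos _ ?_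
      rw [Submodule.coe_sub]
      exact sub_nonneg.mpr h
    have := (Complex.le_def.mp h0).1
    rw [map_sub, Complex.sub_re] at this
    simpa using this
  -- the infimum set B
  set B : Set ℝ := {r : ℝ | ∃ y : S, IsSelfAdjoint (y : C) ∧ x ≤ (y : C) ∧ (τ y).re = r}
    with hBdef
  have hxle : x ≤ ((cS ‖x‖ : S) : C) := by
    rw [hcS_coe, ← halg]
    exact hx.le_algebraMap_norm_self
  have hxge : ((cS (-‖x‖) : S) : C) ≤ x := by
    rw [hcS_coe, ← halg, map_neg]
    exact hx.neg_algebraMap_norm_le_self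
  have hBne : B.Nonempty := ⟨‖x‖, cS ‖x‖, hcS_sa _, hxle, by rw [hcS_τ]; simp⟩
  set m₀ : ℝ := sInf B with hm₀def
  have hlow : ∀ z : S, IsSelfAdjoint (z : C) → (z : C) ≤ x → (τ z).re ≤ m₀ := by
    intro z hzsa hzx
    refine le_csInf hBne ?_
    rintro b ⟨y, hysa, hxy, rfl⟩
    exact hmono z y (hzx.trans hxy)
  have hBbdd : BddBelow B := by
    refine ⟨-‖x‖, ?_⟩
    rintro b ⟨y, hysa, hxy, rfl⟩
    have := hmono (cS (-‖x‖)) y (hxge.trans hxy)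
    rwa [hcS_τ, Complex.ofReal_re] at this
  have hm₀mem : ∀ z : S, IsSelfAdjoint (z : C) → x ≤ (z : C) → m₀ ≤ (τ z).re := by
    intro z hzsa hxz
    exact csInf_le hBbdd ⟨z, hzsa, hxz, rfl⟩
  -- the sublinear functional q
  set Q : C → Set ℝ := fun a =>
    {r : ℝ | ∃ t : ℝ, ∃ y : S, IsSelfAdjoint (y : C) ∧ reC a ≤ t • x + (y : C) ∧
      r = t * m₀ + (τ y).re} with hQdef
  set q : C → ℝ := fun a => sInf (Q a) with hqdef
  have hQne : ∀ a : C, (Q a).Nonempty := by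
    intro a
    refine ⟨‖reC a‖, 0, cS ‖reC a‖, hcS_sa _, ?_, by rw [hcS_τ]; simp⟩
    rw [zero_smul, zero_add, hcS_coe, ← halg]
    exact (hreC_sa a).le_algebraMap_norm_self
  have hQlb : ∀ a : C, ∀ r ∈ Q a, -‖reC a‖ ≤ r := by
    rintro a r ⟨t, y, hysa, hle, rfl⟩
    have hna : ((cS (-‖reC a‖) : S) : C) ≤ reC a := by
      rw [hcS_coe, ← halg, map_neg]
      exact (hreC_sa a).neg_algebraMap_norm_le_self
    rcases lt_trichotomy t 0 with ht | ht | ht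
    · -- t < 0 : the element t⁻¹ • (cS (-‖reC a‖) - y) dominates x
      set z : S := ((t⁻¹ : ℝ) : ℂ) • (cS (-‖reC a‖) - y) with hzdef
      have hz_coe : (z : C) = t⁻¹ • (((cS (-‖reC a‖) : S) : C) - (y : C)) := by
        rw [hzdef, hcoe_smul, Submodule.coe_sub]
      have hzsa : IsSelfAdjoint (z : C) := by
        rw [hz_coe]
        exact .smul (star_trivial _) ((hcS_sa _).sub hysa)
      have hw : ((cS (-‖reC a‖) : S) : C) - (y : C) ≤ t • x :=
        sub_le_iff_le_add.mpr (hna.trans hle)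
      have hxz : x ≤ (z : C) := by
        rw [hz_coe]
        have h2 := hsmul_le (-t⁻¹) (le_of_lt (neg_pos.mpr (inv_lt_zero.mpr ht))) _ _ hw
        rw [smul_smul, neg_mul, inv_mul_cancel₀ (ne_of_lt ht), neg_smul, neg_smul,
          one_smul] at h2
        exact neg_le_neg_iff.mp h2
      have hm := hm₀mem z hzsa hxz
      have hτz : (τ z).re = t⁻¹ * (-‖reC a‖ - (τ y).re) := by
        rw [hzdef, map_smul, map_sub, hcS_τ]
        rw [smul_eq_mul]
        rw [Complex.re_ofReal_mul, Complex.sub_re, Complex.ofReal_re]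
      rw [hτz] at hm
      have hc := mul_le_mul_of_nonpos_left hm (le_of_lt ht)
      rw [← mul_assoc, mul_inv_cancel₀ (ne_of_lt ht), one_mul] at hc
      linarith
    · -- t = 0
      subst ht
      rw [zero_smul, zero_add] at hle
      have := hmono (cS (-‖reC a‖)) y (hna.trans hle)
      rw [hcS_τ, Complex.ofReal_re] at this
      linarith
    · -- t > 0 : the element t⁻¹ • (cS (-‖reC a‖) - y) is below x
      set z : S := ((t⁻¹ : ℝ) : ℂ) • (cS (-‖reC a‖) - y) with hzdef
      have hz_coe : (z : C) = t⁻¹ • (((cS (-‖reC a‖) : S) : C) - (y : C)) := by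
        rw [hzdef, hcoe_smul, Submodule.coe_sub]
      have hzsa : IsSelfAdjoint (z : C) := by
        rw [hz_coe]
        exact .smul (star_trivial _) ((hcS_sa _).sub hysa)
      have hw : ((cS (-‖reC a‖) : S) : C) - (y : C) ≤ t • x :=
        sub_le_iff_le_add.mpr (hna.trans hle)
      have hzx : (z : C) ≤ x := by
        rw [hz_coe]
        have h2 := hsmul_le t⁻¹ (by positivity) _ _ hw
        rwa [smul_smul, inv_mul_cancel₀ (ne_of_gt ht), one_smul] at h2
      have hm := hlow z hzsa hzx
      have hτz : (τ z).re = t⁻¹ * (-‖reC a‖ - (τ y).re) := by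
        rw [hzdef, map_smul, map_sub, hcS_τ, smul_eq_mul,
          Complex.re_ofReal_mul, Complex.sub_re, Complex.ofReal_re]
      rw [hτz] at hm
      have hc := mul_le_mul_of_nonneg_left hm (le_of_lt ht)
      rw [← mul_assoc, mul_inv_cancel₀ (ne_of_gt ht), one_mul] at hc
      linarith
  have hQbdd : ∀ a : C, BddBelow (Q a) := fun a => ⟨-‖reC a‖, fun r hr => hQlb a r hr⟩
  have hqle : ∀ a : C, ∀ r ∈ Q a, q a ≤ r := fun a r hr => csInf_le (hQbdd a) hr
  have hqlb : ∀ a : C, -‖reC a‖ ≤ q a := fun a => le_csInf (hQne a) (hQlb a)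
  -- positive homogeneity
  have hQsmul : ∀ (c : ℝ), 0 < c → ∀ (a : C), ∀ r ∈ Q a, c * r ∈ Q (c • a) := by
    rintro c hc a r ⟨t, y, hysa, hle, rfl⟩
    refine ⟨c * t, ((c : ℝ) : ℂ) • y, ?_, ?_, ?_⟩
    · rw [hcoe_smul]
      exact .smul (star_trivial _) hysa
    · rw [hreC_smul, hcoe_smul]
      calc c • reC a ≤ c • (t • x + (y : C)) := hsmul_le c hc.le _ _ hle
        _ = (c * t) • x + c • (y : C) := by rw [smul_add, smul_smul]
    · rw [map_smul, smul_eq_mul, Complex.re_ofReal_mul]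
      ring
  have hqsmul : ∀ (c : ℝ), 0 < c → ∀ a : C, q (c • a) = c * q a := by
    intro c hc a
    apply le_antisymm
    · have h1 : ∀ r ∈ Q a, c⁻¹ * q (c • a) ≤ r := by
        intro r hr
        have h2 := hqle _ _ (hQsmul c hc a r hr)
        rw [inv_mul_le_iff₀ hc]
        linarith
      have h3 := le_csInf (hQne a) h1
      calc q (c • a) = c * (c⁻¹ * q (c • a)) := by
            rw [← mul_assoc, mul_inv_cancel₀ (ne_of_gt hc), one_mul]
        _ ≤ c * q a := by
            exact mul_le_mul_of_nonneg_left h3 hc.le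
    · have h2 : ∀ r ∈ Q (c • a), c * q a ≤ r := by
        intro r hr
        have hmem := hQsmul c⁻¹ (by positivity) (c • a) r hr
        rw [smul_smul, inv_mul_cancel₀ (ne_of_gt hc), one_smul] at hmem
        have h4 := hqle a _ hmem
        calc c * q a ≤ c * (c⁻¹ * r) := mul_le_mul_of_nonneg_left h4 hc.le
          _ = r := by rw [← mul_assoc, mul_inv_cancel₀ (ne_of_gt hc), one_mul]
      exact le_csInf (hQne _) h2
  -- subadditivity
  have hqadd : ∀ a b : C, q (a + b) ≤ q a + q b := by
    intro a b
    have key : ∀ r ∈ Q a, ∀ s ∈ Q b, q (a + b) ≤ r + s := by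
      rintro r ⟨t, y, hy, hle, rfl⟩ s ⟨t', y', hy', hle', rfl⟩
      refine hqle _ _ ⟨t + t', y + y', ?_, ?_, ?_⟩
      · rw [Submodule.coe_add]
        exact hy.add hy'
      · rw [hreC_add, Submodule.coe_add, add_smul]
        calc reC a + reC b ≤ (t • x + (y : C)) + (t' • x + (y' : C)) := add_le_add hle hle'
          _ = t • x + t' • x + ((y : C) + (y' : C)) := by abel
      · rw [map_add, Complex.add_re]
        ring
    have h2 : ∀ r ∈ Q a, q (a + b) - r ≤ q b :=
      fun r hr => le_csInf (hQne b) (fun s hs => by linarith [key r hr s hs])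
    have h3 : q (a + b) - q b ≤ q a :=
      le_csInf (hQne a) (fun r hr => by linarith [h2 r hr])
    linarith
  -- Hahn-Banach
  have hq0 : (0:ℝ) ≤ q 0 := by
    have := hqlb 0
    have h0 : reC (0 : C) = 0 := by simp [reC]
    rw [h0] at this
    simpa using this
  obtain ⟨g, -, hgq⟩ := exists_extension_of_le_sublinear (⟨⊥, 0⟩ : C →ₗ.[ℝ] ℝ) q
    (fun c hc a => hqsmul c hc a) hqadd
    (by
      rintro ⟨z, hz⟩
      rw [Submodule.mem_bot] at hz
      subst hz
      simpa using hq0)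
  -- facts about g
  have hgx : g x = m₀ := by
    have h1 : q x ≤ m₀ := by
      refine hqle _ _ ⟨1, 0, by simp [IsSelfAdjoint], ?_, by simp⟩
      rw [hreC_eq x hx, one_smul]
      simp
    have h2 : q (-x) ≤ -m₀ := by
      refine hqle _ _ ⟨-1, 0, by simp [IsSelfAdjoint], ?_, by simp⟩
      rw [hreC_neg, hreC_eq x hx, neg_smul, one_smul]
      simp
    have h3 := hgq x
    have h4 := hgq (-x)
    rw [map_neg] at h4
    linarith
  have hg_nonneg : ∀ a : C, 0 ≤ a → 0 ≤ g a := by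
    intro a ha
    have h1 : q (-a) ≤ 0 := by
      refine hqle _ _ ⟨0, 0, by simp [IsSelfAdjoint], ?_, by simp⟩
      rw [hreC_neg, hreC_eq a ha.isSelfAdjoint, zero_smul, zero_add]
      simpa using neg_nonpos.mpr ha
    have h2 := hgq (-a)
    rw [map_neg] at h2
    linarith
  have hg_I : ∀ a : C, IsSelfAdjoint a → g (Complex.I • a) = 0 := by
    intro a ha
    have h1 : q (Complex.I • a) ≤ 0 := by
      refine hqle _ _ ⟨0, 0, by simp [IsSelfAdjoint], ?_, by simp⟩
      rw [hreC_I a ha, zero_smul, zero_add]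
      simp
    have h1' : q (-(Complex.I • a)) ≤ 0 := by
      refine hqle _ _ ⟨0, 0, by simp [IsSelfAdjoint], ?_, by simp⟩
      rw [hreC_neg, hreC_I a ha, neg_zero, zero_smul, zero_add]
      simp
    have h2 := hgq (Complex.I • a)
    have h3 := hgq (-(Complex.I • a))
    rw [map_neg] at h3
    exact le_antisymm (h2.trans h1) (by linarith)
  -- selfadjoint and skew parts inside S
  let starS : S → S := fun s => ⟨star (s : C), hstarS _ s.2⟩
  let reS : S → S := fun s => (2:ℂ)⁻¹ • (s + starS s)
  let wS : S → S := fun s => (2:ℂ)⁻¹ • (s - starS s)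
  have hreS_coe : ∀ s : S, ((reS s : S) : C) = reC (s : C) := by
    intro s
    show (2:ℂ)⁻¹ • ((s:C) + star (s:C)) = (2:ℝ)⁻¹ • ((s:C) + star (s:C))
    rw [← Complex.coe_smul]
    norm_num
  have hgS_le : ∀ s : S, g (s : C) ≤ (τ (reS s)).re := by
    intro s
    refine (hgq _).trans (hqle _ _ ⟨0, reS s, ?_, ?_, by simp⟩)
    · rw [hreS_coe]
      exact hreC_sa _
    · rw [hreS_coe, zero_smul, zero_add]
  have hreS_neg : ∀ s : S, reS (-s) = - reS s := by
    intro s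
    apply Subtype.ext
    show ((reS (-s) : S) : C) = ((- reS s : S) : C)
    have h1 : ((-s : S) : C) = -(s : C) := by push_cast; ring_nf
    have h2 : ((- reS s : S) : C) = -((reS s : S) : C) := by push_cast; ring_nf
    rw [hreS_coe, h1, h2, hreS_coe, hreC_neg]
  have hgS : ∀ s : S, g (s : C) = (τ (reS s)).re := by
    intro s
    refine le_antisymm (hgS_le s) ?_
    have h2 := hgS_le (-s)
    have hc : ((-s : S) : C) = -(s : C) := by push_cast; ring_nf
    rw [hreS_neg, map_neg, Complex.neg_re, hc, map_neg] at h2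
    linarith
  -- the extension ω
  let ω : C →ₗ[ℂ] ℂ := LinearMap.extendTo𝕜' g
  have hω_apply : ∀ a : C, ω a = (g a : ℂ) - Complex.I * (g (Complex.I • a) : ℂ) := by
    intro a
    have h := LinearMap.extendTo𝕜'_apply (𝕜 := ℂ) g a
    rw [show ω a = Module.Dual.extendRCLike g a from rfl]
    simpa using h
  have hω1 : ω 1 = 1 := by
    have hg1 : g 1 = 1 := by
      have h := hgS oneS
      have h1 : reS oneS = oneS := by
        apply Subtype.ext
        rw [hreS_coe]
        exact hreC_eq _ (IsSelfAdjoint.one C)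
      rw [h1] at h
      have h2 : τ oneS = 1 := hτ1
      rw [h2] at h
      simpa using h
    rw [hω_apply 1, hg1, hg_I 1 (IsSelfAdjoint.one C)]
    simp
  have hωpos : ∀ z : C, 0 ≤ ω (star z * z) := by
    intro z
    rw [hω_apply, hg_I _ (IsSelfAdjoint.star_mul_self z)]
    simp only [Complex.ofReal_zero, mul_zero, sub_zero]
    exact Complex.zero_le_real.mpr (hg_nonneg _ (star_mul_self_nonneg z))
  have hωext : ∀ s : S, ω (s : C) = τ s := by
    intro s
    have hsplit : τ (reS s) + τ (wS s) = τ s := by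
      rw [← map_add]
      congr 1
      apply Subtype.ext
      show (2:ℂ)⁻¹ • ((s:C) + star (s:C)) + (2:ℂ)⁻¹ • ((s:C) - star (s:C)) = (s : C)
      module
    have hwstar : star ((wS s : S) : C) = -((wS s : S) : C) := by
      show star ((2:ℂ)⁻¹ • ((s:C) - star (s:C))) = -((2:ℂ)⁻¹ • ((s:C) - star (s:C)))
      rw [star_smul, star_sub, star_star, show star ((2:ℂ)⁻¹) = (2:ℂ)⁻¹ by simp]
      module
    have hv_sa : IsSelfAdjoint (((-Complex.I) • wS s : S) : C) := by
      show star ((-Complex.I) • ((wS s : S) : C)) = (-Complex.I) • ((wS s : S) : C)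
      rw [star_smul, hwstar, star_neg, Complex.star_def, Complex.conj_I, neg_neg, smul_neg,
        ← neg_smul]
    have hβ : (τ (wS s)).re = 0 := by
      have him := hτreal _ hv_sa
      rw [map_smul, smul_eq_mul] at him
      simp only [Complex.mul_im, Complex.neg_re, Complex.I_re, Complex.neg_im, Complex.I_im,
        neg_zero, zero_mul, neg_mul, one_mul, zero_add] at him
      linarith
    have hα : (τ (reS s)).im = 0 := by
      refine hτreal _ ?_
      rw [hreS_coe]
      exact hreC_sa _
    have h5 : reS (Complex.I • s) = Complex.I • wS s := by
      apply Subtype.ext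
      show (2:ℂ)⁻¹ • (Complex.I • (s:C) + star (Complex.I • (s:C)))
          = Complex.I • ((2:ℂ)⁻¹ • ((s:C) - star (s:C)))
      rw [star_smul, Complex.star_def, Complex.conj_I]
      module
    have hgI_s : g (Complex.I • (s : C)) = -(τ (wS s)).im := by
      have h6 := hgS (Complex.I • s)
      rw [h5, map_smul, smul_eq_mul] at h6
      rw [show ((Complex.I • s : S) : C) = Complex.I • (s : C) from rfl] at h6
      rw [h6, Complex.mul_re]
      simp
    rw [hω_apply, hgS s, hgI_s]
    apply Complex.ext
    · rw [← hsplit]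
      simp [Complex.add_re, Complex.sub_re, Complex.mul_re, hβ]
    · rw [← hsplit]
      simp [Complex.add_im, Complex.sub_im, Complex.mul_im, hα]
  have hωx : (ω x).re = m₀ := by
    rw [hω_apply]
    simp [Complex.sub_re, Complex.mul_re, hgx]
  -- positivity of a positive functional on all nonnegative elements
  have hpos_ext : ∀ ω' : C →ₗ[ℂ] ℂ, (∀ z : C, 0 ≤ ω' (star z * z)) →
      ∀ a : C, 0 ≤ a → 0 ≤ ω' a := by
    intro ω' hω' a ha
    rw [StarOrderedRing.nonneg_iff] at ha
    induction ha using AddSubmonoid.closure_induction with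
    | mem z hz =>
      obtain ⟨w, rfl⟩ := hz
      exact hω' w
    | zero => simp
    | add a b _ _ hA hB =>
      rw [map_add]
      exact add_nonneg hA hB
  have hub : ∀ r ∈ A, r ≤ m₀ := by
    rintro r ⟨ω', hω'1, hω'pos, hω'ext, rfl⟩
    refine le_csInf hBne ?_
    rintro b ⟨y, hysa, hxy, rfl⟩
    have h0 : 0 ≤ ω' ((y : C) - x) := hpos_ext ω' hω'pos _ (sub_nonneg.mpr hxy)
    have h1 := (Complex.le_def.mp h0).1
    rw [map_sub, Complex.sub_re, hω'ext y] at h1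
    simp only [Complex.zero_re] at h1
    linarith
  have hm₀A : m₀ ∈ A := ⟨ω, hω1, hωpos, hωext, hωx⟩
  exact le_antisymm (csSup_le ⟨m₀, hm₀A⟩ hub) (le_csSup ⟨m₀, hub⟩ hm₀A)
end

section
/- Let H be a complex Hilbert space, let P and Q be orthogonal projections on H with PQ = QP, and let T be a positive contraction on H (T is a bounded operator with 0 ≤ T and ‖T‖ ≤ 1). Then T ≤ P + Q if and only if T ≤ P + Q − PQ. -/
set_option maxHeartbeats 1000000 in
/-- Lemma 2.5 (i): if `P`, `Q` are commuting orthogonal projections on a Hilbert space and `T`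
is a positive contraction, then `T ≤ P + Q` iff `T ≤ P ∨ Q = P + Q - PQ`. -/
theorem stmt1 {H : Type*} [NormedAddCommGroup H] [InnerProductSpace ℂ H] [CompleteSpace H]
    (P Q T : H →L[ℂ] H)
    (hPidem : IsIdempotentElem P) (hPsa : IsSelfAdjoint P)
    (hQidem : IsIdempotentElem Q) (hQsa : IsSelfAdjoint Q)
    (hcomm : P * Q = Q * P)
    (hTpos : T.IsPositive) (hTnorm : ‖T‖ ≤ 1) :
    (P + Q - T).IsPositive ↔ (P + Q - P * Q - T).IsPositive := by
  have hPs : star P = P := hPsa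
  have hQs : star Q = Q := hQsa
  have hTs : star T = T := hTpos.isSelfAdjoint
  rw [← ContinuousLinearMap.nonneg_iff_isPositive, ← ContinuousLinearMap.nonneg_iff_isPositive,
    sub_nonneg, sub_nonneg]
  have hT0 : (0 : H →L[ℂ] H) ≤ T := (ContinuousLinearMap.nonneg_iff_isPositive T).mpr hTpos
  have hPQs : star (P * Q) = P * Q := by rw [star_mul, hPs, hQs, hcomm]
  have hPQP : P * Q * P = P * Q := by
    rw [mul_assoc, ← hcomm, ← mul_assoc, hPidem.eq]
  have hQPQ : Q * P * Q = P * Q := by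
    rw [← hcomm, mul_assoc, hQidem.eq]
  have hPQidem : (P * Q) * (P * Q) = P * Q := by
    rw [← mul_assoc, mul_assoc P Q P, ← hcomm, ← mul_assoc, hPidem.eq, mul_assoc, hQidem.eq]
  have hPQ0 : (0 : H →L[ℂ] H) ≤ P * Q := by
    simpa [hPQs, hPQidem] using star_mul_self_nonneg (P * Q)
  constructor
  · -- forward direction
    intro h
    set R : H →L[ℂ] H := P + Q - P * Q with hR
    have hRP : R * P = P := by
      rw [hR, sub_mul, add_mul, hPidem.eq, hPQP, ← hcomm]
      abel
    have hRQ : R * Q = Q := by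
      rw [hR, sub_mul, add_mul, hQidem.eq, mul_assoc, hQidem.eq]
      abel
    have hPR : P * R = P := by
      rw [hR, mul_sub, mul_add, hPidem.eq, ← mul_assoc, hPidem.eq]
      abel
    have hQR : Q * R = Q := by
      rw [hR, mul_sub, mul_add, hQidem.eq, ← mul_assoc, hQPQ, ← hcomm]
      abel
    have hRs : star R = R := by
      simp [hR, star_sub, star_add, hPs, hQs, hPQs]
    have hRR : R * R = R := by
      have : R * R = R * P + R * Q - R * (P * Q) := by
        rw [hR]; noncomm_ring
      rw [this, hRP, hRQ, ← mul_assoc, hRP, hR]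
    have hR0 : (0 : H →L[ℂ] H) ≤ R := by
      simpa [hRs, hRR] using star_mul_self_nonneg R
    set e : H →L[ℂ] H := 1 - R with he
    have hes : star e = e := by simp [he, hRs]
    have heP : e * P = 0 := by simp [he, sub_mul, hRP]
    have heQ : e * Q = 0 := by simp [he, sub_mul, hRQ]
    have h1 : e * T * e ≤ e * (P + Q) * e := by
      simpa [hes] using star_left_conjugate_le_conjugate h e
    have h2 : e * (P + Q) * e = 0 := by
      rw [mul_add, heP, heQ]; simp
    have h3 : (0 : H →L[ℂ] H) ≤ e * T * e := by
      simpa [hes] using star_left_conjugate_le_conjugate hT0 e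
    have h4 : e * T * e = 0 := le_antisymm (h1.trans_eq h2) h3
    -- use the square root of T
    set s : H →L[ℂ] H := CFC.sqrt T with hs
    have hs0 : (0 : H →L[ℂ] H) ≤ s := CFC.sqrt_nonneg (a := T)
    have hss : s * s = T := CFC.sqrt_mul_sqrt_self T hT0
    have hsstar : star s = s := (IsSelfAdjoint.of_nonneg hs0).star_eq
    have hse : s * e = 0 := by
      rw [← CStarRing.star_mul_self_eq_zero_iff (s * e), star_mul, hsstar, hes]
      calc e * s * (s * e) = e * (s * s) * e := by noncomm_ring
        _ = 0 := by rw [hss, h4]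
    have hTe : T * e = 0 := by
      rw [← hss, mul_assoc, hse, mul_zero]
    have heT : e * T = 0 := by
      have := congrArg star hTe
      simpa [star_mul, hes, hTs] using this
    have hTRTR : R * T * R = T := by
      have hR1 : R = 1 - e := by rw [he]; abel
      rw [hR1]
      calc (1 - e) * T * (1 - e) = T - e * T - (T * e - e * (T * e)) := by noncomm_ring
        _ = T := by rw [hTe, heT, mul_zero]; abel
    have hTnorm' : T ≤ algebraMap ℝ (H →L[ℂ] H) ‖T‖ :=
      IsSelfAdjoint.le_algebraMap_norm_self hTpos.isSelfAdjoint
    have h5 : T ≤ algebraMap ℝ (H →L[ℂ] H) ‖T‖ * R := by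
      have h := star_left_conjugate_le_conjugate hTnorm' R
      rw [hRs, hTRTR] at h
      refine h.trans_eq ?_
      rw [← Algebra.commutes, mul_assoc, hRR]
    have h6 : algebraMap ℝ (H →L[ℂ] H) ‖T‖ * R ≤ R := by
      have hc : (0 : ℝ) ≤ 1 - ‖T‖ := by linarith
      set c : H →L[ℂ] H := algebraMap ℝ (H →L[ℂ] H) (Real.sqrt (1 - ‖T‖)) with hcdef
      have hcs : star c = c := by
        simp [hcdef, Algebra.algebraMap_eq_smul_one, star_smul]
      have h0 : (0 : H →L[ℂ] H) ≤ star c * R * c := by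
        simpa using star_left_conjugate_le_conjugate hR0 c
      have hcc : star c * R * c = algebraMap ℝ (H →L[ℂ] H) (1 - ‖T‖) * R := by
        rw [hcs, mul_assoc, ← Algebra.commutes, ← mul_assoc, hcdef, ← map_mul,
          Real.mul_self_sqrt hc]
      rw [hcc] at h0
      have : R - algebraMap ℝ (H →L[ℂ] H) ‖T‖ * R = algebraMap ℝ (H →L[ℂ] H) (1 - ‖T‖) * R := by
        rw [map_sub, sub_mul, map_one, one_mul]
      rw [← this] at h0
      exact sub_nonneg.mp h0
    exact h5.trans h6
  · -- reverse direction
    intro h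
    refine h.trans ?_
    have : P + Q - P * Q ≤ P + Q - 0 := by
      exact sub_le_sub_left hPQ0 _
    simpa using this
end

section
/- Let n, m be positive integers, let φ be a state on M_n and ψ a state on M_m, and let T ∈ M_n ⊗ M_m be a positive semidefinite contraction (T positive semidefinite with ‖T‖ ≤ 1). Then α(T) ≤ β(T) ≤ γ(T) ≤ 1. -/
open scoped ComplexOrder Kronecker Matrix
open Filter

noncomputable section

abbrev Mat (k : ℕ) := Matrix (Fin k) (Fin k) ℂ
abbrev Mat2 (n m : ℕ) := Matrix (Fin n × Fin m) (Fin n × Fin m) ℂ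

/-- A state on a matrix algebra: a unital positive linear functional. -/
def IsState {ι : Type*} [Fintype ι] [DecidableEq ι] (ω : Matrix ι ι ℂ →ₗ[ℂ] ℂ) : Prop :=
  ω 1 = 1 ∧ ∀ x, 0 ≤ ω (xᴴ * x)

/-- Loewner order: `A ≤ B` iff `B - A` is positive semidefinite. -/
def Loewner {ι : Type*} [Fintype ι] (A B : Matrix ι ι ℂ) : Prop := (B - A).PosSemidef

/-- An orthogonal projection: a hermitian idempotent. -/
def IsProjM {ι : Type*} [Fintype ι] (p : Matrix ι ι ℂ) : Prop := p.IsHermitian ∧ p * p = p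

/-- A coupling of states `φ` and `ψ`. -/
def IsCoupling {n m : ℕ} (φ : Mat n →ₗ[ℂ] ℂ) (ψ : Mat m →ₗ[ℂ] ℂ)
    (σ : Mat2 n m →ₗ[ℂ] ℂ) : Prop :=
  IsState σ ∧ (∀ a : Mat n, σ (a ⊗ₖ (1 : Mat m)) = φ a) ∧
    (∀ b : Mat m, σ ((1 : Mat n) ⊗ₖ b) = ψ b)

def alpha {n m : ℕ} (φ : Mat n →ₗ[ℂ] ℂ) (ψ : Mat m →ₗ[ℂ] ℂ) (T : Mat2 n m) : ℝ :=
  sSup {r : ℝ | ∃ σ, IsCoupling φ ψ σ ∧ (σ T).re = r}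

def beta {n m : ℕ} (φ : Mat n →ₗ[ℂ] ℂ) (ψ : Mat m →ₗ[ℂ] ℂ) (T : Mat2 n m) : ℝ :=
  sInf {r : ℝ | ∃ (a : Mat n) (b : Mat m), a.PosSemidef ∧ b.PosSemidef ∧
      Loewner T (a ⊗ₖ (1 : Mat m) + (1 : Mat n) ⊗ₖ b) ∧ (φ a + ψ b).re = r}

/-- For commuting projections `p ⊗ 1` and `1 ⊗ q`, the projection onto the sum of their ranges is
`p ⊗ 1 + 1 ⊗ q - p ⊗ q`. -/
def gamma {n m : ℕ} (φ : Mat n →ₗ[ℂ] ℂ) (ψ : Mat m →ₗ[ℂ] ℂ) (T : Mat2 n m) : ℝ :=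
  sInf {r : ℝ | ∃ (p : Mat n) (q : Mat m), IsProjM p ∧ IsProjM q ∧
      Loewner T (p ⊗ₖ (1 : Mat m) + (1 : Mat n) ⊗ₖ q - p ⊗ₖ q) ∧ (φ p + ψ q).re = r}

/-- The normalised trace, as a state on `M_k`. -/
def ntr (k : ℕ) : Mat k →ₗ[ℂ] ℂ := (k : ℂ)⁻¹ • Matrix.traceLinearMap (Fin k) ℂ ℂ



lemma kron_conjTranspose {n m : ℕ} (A : Mat n) (B : Mat m) :
    (A ⊗ₖ B)ᴴ = Aᴴ ⊗ₖ Bᴴ := by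
  ext ⟨i, j⟩ ⟨k, l⟩
  simp [Matrix.conjTranspose_apply, Matrix.kroneckerMap_apply]

lemma proj_posSemidef {ι : Type*} [Fintype ι] {p : Matrix ι ι ℂ} (hp : IsProjM p) :
    p.PosSemidef := by
  have h := Matrix.posSemidef_conjTranspose_mul_self p
  rwa [hp.1.eq, hp.2] at h

lemma kron_proj {n m : ℕ} {p : Mat n} {q : Mat m} (hp : IsProjM p) (hq : IsProjM q) :
    IsProjM (p ⊗ₖ q) := by
  constructor
  · show _ = _
    rw [kron_conjTranspose, hp.1.eq, hq.1.eq]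
  · rw [← Matrix.mul_kronecker_mul, hp.2, hq.2]

lemma state_nonneg {ι : Type*} [Fintype ι] [DecidableEq ι] {ω : Matrix ι ι ℂ →ₗ[ℂ] ℂ}
    (hω : IsState ω) {a : Matrix ι ι ℂ} (ha : a.PosSemidef) : 0 ≤ ω a := by
  obtain ⟨B, rfl⟩ : ∃ B : Matrix ι ι ℂ, a = star B * B := by
    open scoped MatrixOrder in
    exact CStarAlgebra.nonneg_iff_eq_star_mul_self.mp ha.nonneg
  exact hω.2 B

lemma state_re_nonneg {ι : Type*} [Fintype ι] [DecidableEq ι] {ω : Matrix ι ι ℂ →ₗ[ℂ] ℂ}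
    (hω : IsState ω) {a : Matrix ι ι ℂ} (ha : a.PosSemidef) : 0 ≤ (ω a).re :=
  (Complex.le_def.mp (state_nonneg hω ha)).1

/-- Theorem 2.7 (first part): `α(T) ≤ β(T) ≤ γ(T) ≤ 1` for a positive contraction `T`. -/
theorem stmt3 {n m : ℕ} (hn : 0 < n) (hm : 0 < m)
    (φ : Mat n →ₗ[ℂ] ℂ) (ψ : Mat m →ₗ[ℂ] ℂ) (hφ : IsState φ) (hψ : IsState ψ)
    (T : Mat2 n m) (hT : T.PosSemidef) (hT1 : Loewner T 1) :
    alpha φ ψ T ≤ beta φ ψ T ∧ beta φ ψ T ≤ gamma φ ψ T ∧ gamma φ ψ T ≤ 1 := by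
  -- The three feasible-value sets
  set A := {r : ℝ | ∃ σ, IsCoupling φ ψ σ ∧ (σ T).re = r} with hA
  set B := {r : ℝ | ∃ (a : Mat n) (b : Mat m), a.PosSemidef ∧ b.PosSemidef ∧
      Loewner T (a ⊗ₖ (1 : Mat m) + (1 : Mat n) ⊗ₖ b) ∧ (φ a + ψ b).re = r} with hB
  set G := {r : ℝ | ∃ (p : Mat n) (q : Mat m), IsProjM p ∧ IsProjM q ∧
      Loewner T (p ⊗ₖ (1 : Mat m) + (1 : Mat n) ⊗ₖ q - p ⊗ₖ q) ∧ (φ p + ψ q).re = r} with hG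
  have hone : IsProjM (1 : Mat n) := ⟨Matrix.isHermitian_one, one_mul 1⟩
  have hzero : ∀ {k : ℕ}, IsProjM (0 : Mat k) := ⟨Matrix.isHermitian_zero, by simp⟩
  -- 1 ∈ G via p = 1, q = 0
  have h1G : (1 : ℝ) ∈ G := by
    refine ⟨1, 0, hone, hzero, ?_, by simp [hφ.1]⟩
    simpa [Matrix.one_kronecker_one] using hT1
  -- G ⊆ B
  have hGB : G ⊆ B := by
    rintro r ⟨p, q, hp, hq, hL, hv⟩
    refine ⟨p, q, proj_posSemidef hp, proj_posSemidef hq, ?_, hv⟩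
    have hpq : (p ⊗ₖ q).PosSemidef := proj_posSemidef (kron_proj hp hq)
    have heq : p ⊗ₖ (1 : Mat m) + (1 : Mat n) ⊗ₖ q - T
        = (p ⊗ₖ (1 : Mat m) + (1 : Mat n) ⊗ₖ q - p ⊗ₖ q - T) + p ⊗ₖ q := by abel
    show Matrix.PosSemidef _
    rw [heq]
    exact hL.add hpq
  -- nonnegativity of elements of B
  have hBpos : ∀ r ∈ B, (0:ℝ) ≤ r := by
    rintro r ⟨a, b, ha, hb, _, rfl⟩
    rw [Complex.add_re]
    exact add_nonneg (state_re_nonneg hφ ha) (state_re_nonneg hψ hb)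
  have hBbdd : BddBelow B := ⟨0, hBpos⟩
  have hGne : G.Nonempty := ⟨1, h1G⟩
  have hBne : B.Nonempty := ⟨1, hGB h1G⟩
  -- every α value is ≤ every β value
  have key : ∀ r ∈ A, ∀ s ∈ B, r ≤ s := by
    rintro r ⟨σ, ⟨hσs, hσa, hσb⟩, rfl⟩ s ⟨a, b, ha, hb, hL, rfl⟩
    have h1 : 0 ≤ (σ (a ⊗ₖ (1 : Mat m) + (1 : Mat n) ⊗ₖ b - T)).re :=
      state_re_nonneg hσs hL
    have h2 : σ (a ⊗ₖ (1 : Mat m) + (1 : Mat n) ⊗ₖ b - T)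
        = φ a + ψ b - σ T := by
      rw [map_sub, map_add, hσa, hσb]
    rw [h2, Complex.sub_re] at h1
    linarith
  refine ⟨?_, csInf_le_csInf hBbdd hGne hGB, csInf_le ⟨0, fun r hr => hBpos r (hGB hr)⟩ h1G⟩
  -- α ≤ β
  have hβpos : 0 ≤ sInf B := le_csInf hBne (hBpos)
  apply Real.sSup_le _ hβpos
  intro r hr
  exact le_csInf hBne (key r hr)


end
end

section
/- Let n, m be positive integers, let φ be a state on M_n and ψ a state on M_m, and let E ∈ M_n ⊗ M_m be an orthogonal projection. Suppose there exist positive semidefinite a ∈ M_n and b ∈ M_m such that E ≤ a ⊗ I_m + I_n ⊗ b, E commutes with both a ⊗ I_m and I_n ⊗ b, and Re(φ(a) + ψ(b)) = β(E). Then β(E) = γ(E). -/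
open scoped ComplexOrder Kronecker Matrix
open Filter

noncomputable section

section Aux

variable {ι κ : Type*} [Fintype ι] [DecidableEq ι] [Fintype κ] [DecidableEq κ]


variable {ι κ : Type*} [Fintype ι] [DecidableEq ι] [Fintype κ] [DecidableEq κ]

def cmat (W : Matrix ι ι ℂ) (f : ι → ℝ) : Matrix ι ι ℂ :=
  W * Matrix.diagonal (fun i => (f i : ℂ)) * Wᴴ

lemma dcoe_mul (f g : ι → ℝ) :
    (Matrix.diagonal fun i => ((f i : ℂ))) * (Matrix.diagonal fun i => ((g i : ℂ)))
      = Matrix.diagonal fun i => (((f * g) i : ℂ)) := by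
  rw [Matrix.diagonal_mul_diagonal]
  congr 1; funext i; simp

lemma cmat_mul {W : Matrix ι ι ℂ} (hW : Wᴴ * W = 1) (f g : ι → ℝ) :
    cmat W f * cmat W g = cmat W (f * g) := by
  simp only [cmat, Matrix.mul_assoc]
  rw [← Matrix.mul_assoc Wᴴ W, hW, Matrix.one_mul,
    ← Matrix.mul_assoc (Matrix.diagonal _) (Matrix.diagonal _) Wᴴ, dcoe_mul]

lemma cmat_one {W : Matrix ι ι ℂ} (hW : W * Wᴴ = 1) : cmat W (fun _ => 1) = 1 := by
  simp [cmat, hW]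

lemma cmat_herm (W : Matrix ι ι ℂ) (f : ι → ℝ) : (cmat W f).IsHermitian := by
  unfold cmat Matrix.IsHermitian
  rw [Matrix.conjTranspose_mul, Matrix.conjTranspose_mul, Matrix.conjTranspose_conjTranspose,
    Matrix.diagonal_conjTranspose, Matrix.mul_assoc]
  congr 2
  funext i; simp [Pi.star_def]

lemma cmat_psd (W : Matrix ι ι ℂ) {f : ι → ℝ} (hf : ∀ i, 0 ≤ f i) : (cmat W f).PosSemidef :=
  (Matrix.posSemidef_diagonal_iff.mpr (by intro i; exact_mod_cast hf i)).mul_mul_conjTranspose_same W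

lemma dcoe_add (f g : ι → ℝ) : (fun i => (((f + g) i : ℝ) : ℂ))
    = (fun i => ((f i : ℝ) : ℂ) + ((g i : ℝ) : ℂ)) := by funext i; simp

lemma dcoe_sub (f g : ι → ℝ) : (fun i => (((f - g) i : ℝ) : ℂ))
    = (fun i => ((f i : ℝ) : ℂ) - ((g i : ℝ) : ℂ)) := by funext i; simp

lemma dcoe_smul (r : ℝ) (f : ι → ℝ) : (fun i => (((r • f) i : ℝ) : ℂ))
    = (r : ℂ) • (fun i => ((f i : ℝ) : ℂ)) := by funext i; simp

lemma cmat_add (W : Matrix ι ι ℂ) (f g : ι → ℝ) : cmat W (f + g) = cmat W f + cmat W g := by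
  rw [cmat, dcoe_add, ← Matrix.diagonal_add, Matrix.mul_add, Matrix.add_mul]; rfl

lemma cmat_sub (W : Matrix ι ι ℂ) (f g : ι → ℝ) : cmat W (f - g) = cmat W f - cmat W g := by
  rw [cmat, dcoe_sub, ← Matrix.diagonal_sub, Matrix.mul_sub, Matrix.sub_mul]; rfl

lemma cmat_smul (W : Matrix ι ι ℂ) (r : ℝ) (f : ι → ℝ) :
    cmat W (r • f) = (r : ℂ) • cmat W f := by
  rw [cmat, dcoe_smul, Matrix.diagonal_smul, Matrix.mul_smul, Matrix.smul_mul]; rfl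

lemma diag_comm_of (N : Matrix ι ι ℂ) (h : ι → ℂ) (hc : ∀ x y, N x y ≠ 0 → h x = h y) :
    N * Matrix.diagonal h = Matrix.diagonal h * N := by
  ext x y
  rw [Matrix.mul_diagonal, Matrix.diagonal_mul]
  by_cases hN : N x y = 0
  · simp [hN]
  · rw [hc x y hN]; ring

lemma entry_eq_of_comm (N : Matrix ι ι ℂ) (g : ι → ℂ)
    (hN : N * Matrix.diagonal g = Matrix.diagonal g * N) :
    ∀ x y, N x y ≠ 0 → g x = g y := by
  intro x y h
  have h2 := congrFun (congrFun hN x) y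
  rw [Matrix.mul_diagonal, Matrix.diagonal_mul] at h2
  have h3 : N x y * (g y - g x) = 0 := by linear_combination h2
  rcases mul_eq_zero.mp h3 with h1 | h1
  · exact absurd h1 h
  · exact (sub_eq_zero.mp h1).symm

lemma kron_conjT (A : Matrix ι ι ℂ) (B : Matrix κ κ ℂ) : (A ⊗ₖ B)ᴴ = Aᴴ ⊗ₖ Bᴴ := by
  ext x y
  simp [Matrix.conjTranspose_apply, Matrix.kroneckerMap_apply, mul_comm]

lemma cmat_kron (W1 : Matrix ι ι ℂ) (W2 : Matrix κ κ ℂ) (f : ι → ℝ) (g : κ → ℝ) :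
    cmat W1 f ⊗ₖ cmat W2 g = cmat (W1 ⊗ₖ W2) (fun x => f x.1 * g x.2) := by
  simp only [cmat]
  rw [Matrix.mul_kronecker_mul, Matrix.mul_kronecker_mul,
    Matrix.diagonal_kronecker_diagonal, ← kron_conjT]
  congr 2
  funext x; simp

lemma kron_unitary_l {W1 : Matrix ι ι ℂ} {W2 : Matrix κ κ ℂ}
    (h1 : W1 * W1ᴴ = 1) (h2 : W2 * W2ᴴ = 1) : (W1 ⊗ₖ W2) * (W1 ⊗ₖ W2)ᴴ = 1 := by
  rw [kron_conjT, ← Matrix.mul_kronecker_mul, h1, h2, Matrix.one_kronecker_one]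

lemma kron_unitary_r {W1 : Matrix ι ι ℂ} {W2 : Matrix κ κ ℂ}
    (h1 : W1ᴴ * W1 = 1) (h2 : W2ᴴ * W2 = 1) : (W1 ⊗ₖ W2)ᴴ * (W1 ⊗ₖ W2) = 1 := by
  rw [kron_conjT, ← Matrix.mul_kronecker_mul, h1, h2, Matrix.one_kronecker_one]

lemma psd_kron {A : Matrix ι ι ℂ} {B : Matrix κ κ ℂ}
    (hA : A.PosSemidef) (hB : B.PosSemidef) : (A ⊗ₖ B).PosSemidef := by
  exact hA.kronecker hB

lemma proj_psd {p : Matrix ι ι ℂ} (hp : p.IsHermitian) (hpp : p * p = p) : p.PosSemidef := by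
  have h : p = pᴴ * p := by rw [hp]; exact hpp.symm
  rw [h]; exact Matrix.posSemidef_conjTranspose_mul_self p

open scoped MatrixOrder Matrix.Norms.L2Operator in
lemma state_psd_re_nonneg {φ : Matrix ι ι ℂ →ₗ[ℂ] ℂ} (hφ : ∀ x, 0 ≤ φ (xᴴ * x))
    {A : Matrix ι ι ℂ} (hA : A.PosSemidef) : 0 ≤ (φ A).re := by
  obtain ⟨B, hB⟩ := CStarAlgebra.nonneg_iff_eq_star_mul_self.mp hA.nonneg
  rw [hB]
  exact (Complex.le_def.mp (hφ B)).1

lemma diag_decomp (f : ι → ℝ) : (Matrix.diagonal fun i => ((f i : ℝ) : ℂ))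
    = ∑ j, (f j : ℂ) • Matrix.diagonal (fun i => (((Pi.single j 1 : ι → ℝ) i : ℝ) : ℂ)) := by
  ext x y
  rw [Matrix.sum_apply]
  by_cases h : x = y
  · subst h
    simp [Matrix.diagonal_apply, Pi.single_apply, apply_ite ((↑·) : ℝ → ℂ), mul_ite, mul_one,
      mul_zero, Finset.sum_ite_eq, Finset.sum_ite_eq']
  · simp [Matrix.diagonal_apply_ne _ h]

lemma cmat_decomp (W : Matrix ι ι ℂ) (f : ι → ℝ) :
    cmat W f = ∑ j, (f j : ℂ) • cmat W (Pi.single j 1) := by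
  simp only [cmat]
  rw [diag_decomp, Finset.mul_sum, Finset.sum_mul]
  congr 1; funext j
  rw [Matrix.mul_smul, Matrix.smul_mul]

lemma single_sq (j : ι) : (Pi.single j 1 : ι → ℝ) * Pi.single j 1 = Pi.single j 1 := by
  funext x; by_cases h : x = j <;> simp [Pi.single_apply, h]

lemma cmat_single_psd (W : Matrix ι ι ℂ) (j : ι) :
    cmat W (Pi.single j 1) =
      ((Matrix.diagonal fun i => (((Pi.single j 1 : ι → ℝ) i : ℝ) : ℂ)) * Wᴴ)ᴴ *
      ((Matrix.diagonal fun i => (((Pi.single j 1 : ι → ℝ) i : ℝ) : ℂ)) * Wᴴ) := by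
  have hdd : (Matrix.diagonal fun i => (((Pi.single j 1 : ι → ℝ) i : ℝ) : ℂ)) *
      (Matrix.diagonal fun i => (((Pi.single j 1 : ι → ℝ) i : ℝ) : ℂ)) =
      Matrix.diagonal fun i => (((Pi.single j 1 : ι → ℝ) i : ℝ) : ℂ) := by
    rw [dcoe_mul, single_sq]
  have hst : (star fun i => (((Pi.single j 1 : ι → ℝ) i : ℝ) : ℂ))
      = fun i => (((Pi.single j 1 : ι → ℝ) i : ℝ) : ℂ) := by
    funext i; simp [Pi.star_def]
  rw [Matrix.conjTranspose_mul, Matrix.conjTranspose_conjTranspose,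
    Matrix.diagonal_conjTranspose, hst, Matrix.mul_assoc,
    ← Matrix.mul_assoc (Matrix.diagonal _) (Matrix.diagonal _) Wᴴ, hdd, cmat, Matrix.mul_assoc]

lemma state_cmat_re {φ : Matrix ι ι ℂ →ₗ[ℂ] ℂ} (W : Matrix ι ι ℂ) (f : ι → ℝ) :
    (φ (cmat W f)).re = ∑ j, f j * (φ (cmat W (Pi.single j 1))).re := by
  rw [cmat_decomp, map_sum, Complex.re_sum]
  congr 1; funext j
  rw [_root_.map_smul, smul_eq_mul, Complex.re_ofReal_mul]

lemma comm_cmat_of_comm_diag {W : Matrix ι ι ℂ} (hWl : W * Wᴴ = 1)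
    (M : Matrix ι ι ℂ) (f : ι → ℝ)
    (h : (Wᴴ * M * W) * Matrix.diagonal (fun i => ((f i : ℝ) : ℂ))
       = Matrix.diagonal (fun i => ((f i : ℝ) : ℂ)) * (Wᴴ * M * W)) :
    M * cmat W f = cmat W f * M := by
  have e1 : M * cmat W f = W * ((Wᴴ * M * W) * Matrix.diagonal (fun i => ((f i : ℝ) : ℂ))) * Wᴴ := by
    simp only [cmat, ← Matrix.mul_assoc]
    rw [hWl, Matrix.one_mul]
  have e2 : cmat W f * M
      = W * (Matrix.diagonal (fun i => ((f i : ℝ) : ℂ)) * (Wᴴ * M * W)) * Wᴴ := by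
    simp only [cmat, ← Matrix.mul_assoc]
    rw [Matrix.mul_assoc _ W Wᴴ, hWl, Matrix.mul_one]
  rw [e1, e2, h]

lemma comm_diag_of_comm_cmat {W : Matrix ι ι ℂ} (hWr : Wᴴ * W = 1)
    (M : Matrix ι ι ℂ) (f : ι → ℝ)
    (h : M * cmat W f = cmat W f * M) :
    (Wᴴ * M * W) * Matrix.diagonal (fun i => ((f i : ℝ) : ℂ))
       = Matrix.diagonal (fun i => ((f i : ℝ) : ℂ)) * (Wᴴ * M * W) := by
  have e1 : (Wᴴ * M * W) * Matrix.diagonal (fun i => ((f i : ℝ) : ℂ))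
      = Wᴴ * (M * cmat W f) * W := by
    simp only [cmat, ← Matrix.mul_assoc]
    rw [Matrix.mul_assoc _ Wᴴ W, hWr, Matrix.mul_one]
  have e2 : Matrix.diagonal (fun i => ((f i : ℝ) : ℂ)) * (Wᴴ * M * W)
      = Wᴴ * (cmat W f * M) * W := by
    simp only [cmat, ← Matrix.mul_assoc]
    rw [hWr, Matrix.one_mul]
  rw [e1, e2, h]

lemma mat_eq_zero_of_mulVec (F : Matrix ι ι ℂ) (h : ∀ x, F *ᵥ x = 0) : F = 0 := by
  ext i j
  have := congrFun (h (Pi.single j 1)) i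
  simpa [Matrix.mulVec_single] using this

lemma key_vanish (E P A B : Matrix ι ι ℂ)
    (hEP : E * P = P * E) (hPP : P * P = P) (hPH : P.IsHermitian) (hEE : E * E = E)
    (hle : (A + B - E).PosSemidef)
    {t μ : ℝ} (htμ : t + μ < 1)
    (hA : ((t : ℂ) • P - P * A * P).PosSemidef)
    (hB : ((μ : ℂ) • P - P * B * P).PosSemidef) :
    P * E = 0 := by
  set F := P * E with hF
  have hEF : E * F = F := by rw [hF, ← Matrix.mul_assoc, hEP, Matrix.mul_assoc, hEE]
  have hPF : P * F = F := by rw [hF, ← Matrix.mul_assoc, hPP]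
  apply mat_eq_zero_of_mulVec
  intro x
  set y := F *ᵥ x with hy
  have hEy : E *ᵥ y = y := by rw [hy, Matrix.mulVec_mulVec, hEF]
  have hPy : P *ᵥ y = y := by rw [hy, Matrix.mulVec_mulVec, hPF]
  have hPdot : ∀ z, star y ⬝ᵥ (P *ᵥ z) = star y ⬝ᵥ z := by
    intro z
    rw [Matrix.dotProduct_mulVec, show star y ᵥ* P = star y by
      rw [← hPH.eq, ← Matrix.star_mulVec, hPy]]
  set c := star y ⬝ᵥ y with hc
  have hc0 : 0 ≤ c := dotProduct_star_self_nonneg y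
  have hre0 : 0 ≤ c.re := (Complex.le_def.mp hc0).1
  have him0 : c.im = 0 := ((Complex.le_def.mp hc0).2).symm
  set rA := (star y ⬝ᵥ (A *ᵥ y)).re with hrA
  set rB := (star y ⬝ᵥ (B *ᵥ y)).re with hrB
  have h1 : c.re ≤ rA + rB := by
    have := (Complex.le_def.mp (hle.dotProduct_mulVec_nonneg y)).1
    rw [Matrix.sub_mulVec, Matrix.add_mulVec, dotProduct_sub, dotProduct_add,
      hEy] at this
    simpa [Complex.sub_re, Complex.add_re] using this
  have h2 : rA ≤ t * c.re := by
    have := (Complex.le_def.mp (hA.dotProduct_mulVec_nonneg y)).1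
    rw [Matrix.sub_mulVec, dotProduct_sub, Matrix.smul_mulVec, hPy,
      dotProduct_smul, show (P * A * P) *ᵥ y = P *ᵥ (A *ᵥ y) by
        rw [← Matrix.mulVec_mulVec, ← Matrix.mulVec_mulVec, hPy]] at this
    rw [hPdot] at this
    have : 0 ≤ ((t : ℂ) * c).re - rA := by simpa [Complex.sub_re, smul_eq_mul] using this
    rw [Complex.re_ofReal_mul] at this
    linarith
  have h3 : rB ≤ μ * c.re := by
    have := (Complex.le_def.mp (hB.dotProduct_mulVec_nonneg y)).1
    rw [Matrix.sub_mulVec, dotProduct_sub, Matrix.smul_mulVec, hPy,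
      dotProduct_smul, show (P * B * P) *ᵥ y = P *ᵥ (B *ᵥ y) by
        rw [← Matrix.mulVec_mulVec, ← Matrix.mulVec_mulVec, hPy]] at this
    rw [hPdot] at this
    have : 0 ≤ ((μ : ℂ) * c).re - rB := by simpa [Complex.sub_re, smul_eq_mul] using this
    rw [Complex.re_ofReal_mul] at this
    linarith
  have hcre : c.re = 0 := by nlinarith
  have : c = 0 := Complex.ext hcre him0
  have hy0 : y = 0 := dotProduct_star_self_eq_zero.mp this
  exact hy0


open MeasureTheory in

lemma exists_threshold {ιa ιb : Type*} [Fintype ιa] [Fintype ιb] (w : ιa → ℝ) (v : ιb → ℝ)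
    (d : ιa → ℝ) (e : ιb → ℝ) (hw : ∀ i, 0 ≤ w i) (hv : ∀ j, 0 ≤ v j)
    (hd : ∀ i, 0 ≤ d i) (he : ∀ j, 0 ≤ e j) :
    ∃ t : ℝ, t ∈ Set.Ioo (0:ℝ) 1 ∧
      ((∑ i, w i * (if t < d i then 1 else 0)) + ∑ j, v j * (if 1 - t ≤ e j then 1 else 0))
        ≤ (∑ i, w i * d i) + ∑ j, v j * e j := by
  classical
  set g : ℝ → ℝ := fun t => (∑ i, (Set.Iio (d i)).indicator (fun _ => w i) t)
    + ∑ j, (Set.Ici (1 - e j)).indicator (fun _ => v j) t with hg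
  have hvol : volume (Set.Ioo (0:ℝ) 1) = 1 := by
    rw [Real.volume_Ioo]; norm_num
  have hint1 : ∀ i : ιa, IntegrableOn ((Set.Iio (d i)).indicator (fun _ => w i))
      (Set.Ioo (0:ℝ) 1) volume := by
    intro i
    exact (MeasureTheory.integrableOn_const (by rw [hvol]; norm_num)).indicator
      measurableSet_Iio
  have hint2 : ∀ j : ιb, IntegrableOn ((Set.Ici (1 - e j)).indicator (fun _ => v j))
      (Set.Ioo (0:ℝ) 1) volume := by
    intro j
    exact (MeasureTheory.integrableOn_const (by rw [hvol]; norm_num)).indicator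
      measurableSet_Ici
  have hintg : IntegrableOn g (Set.Ioo (0:ℝ) 1) volume := by
    apply MeasureTheory.Integrable.add
    · exact MeasureTheory.integrable_finset_sum _ (fun i _ => hint1 i)
    · exact MeasureTheory.integrable_finset_sum _ (fun j _ => hint2 j)
  obtain ⟨t, ht, hle⟩ := MeasureTheory.exists_le_setAverage (μ := volume)
    (s := Set.Ioo (0:ℝ) 1) (f := g) (by rw [hvol]; norm_num) (by rw [hvol]; norm_num) hintg
  refine ⟨t, ht, ?_⟩
  have havg : ⨍ x in Set.Ioo (0:ℝ) 1, g x ∂volume = ∫ x in Set.Ioo (0:ℝ) 1, g x ∂volume := by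
    rw [MeasureTheory.setAverage_eq, MeasureTheory.measureReal_def, hvol]; simp
  have hbound : ∫ x in Set.Ioo (0:ℝ) 1, g x ∂volume ≤ (∑ i, w i * d i) + ∑ j, v j * e j := by
    rw [hg]
    rw [MeasureTheory.integral_add (MeasureTheory.integrable_finset_sum _ (fun i _ => hint1 i))
      (MeasureTheory.integrable_finset_sum _ (fun j _ => hint2 j)),
      MeasureTheory.integral_finset_sum _ (fun i _ => hint1 i),
      MeasureTheory.integral_finset_sum _ (fun j _ => hint2 j)]
    apply add_le_add
    · apply Finset.sum_le_sum
      intro i _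
      rw [MeasureTheory.setIntegral_indicator measurableSet_Iio, MeasureTheory.setIntegral_const]
      have hsub : Set.Ioo (0:ℝ) 1 ∩ Set.Iio (d i) ⊆ Set.Ioo 0 (d i) := by
        rintro x ⟨⟨h1, _⟩, h3⟩; exact ⟨h1, h3⟩
      have : (volume (Set.Ioo (0:ℝ) 1 ∩ Set.Iio (d i))).toReal ≤ d i := by
        apply ENNReal.toReal_le_of_le_ofReal (hd i)
        refine le_trans (measure_mono hsub) ?_
        rw [Real.volume_Ioo]
        exact ENNReal.ofReal_le_ofReal (by linarith)
      calc (volume (Set.Ioo (0:ℝ) 1 ∩ Set.Iio (d i))).toReal • w i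
          ≤ d i * w i := by
            rw [smul_eq_mul]; exact mul_le_mul_of_nonneg_right this (hw i)
        _ = w i * d i := mul_comm _ _
    · apply Finset.sum_le_sum
      intro j _
      rw [MeasureTheory.setIntegral_indicator measurableSet_Ici, MeasureTheory.setIntegral_const]
      have hsub : Set.Ioo (0:ℝ) 1 ∩ Set.Ici (1 - e j) ⊆ Set.Ico (1 - e j) 1 := by
        rintro x ⟨⟨_, h2⟩, h3⟩; exact ⟨h3, h2⟩
      have : (volume (Set.Ioo (0:ℝ) 1 ∩ Set.Ici (1 - e j))).toReal ≤ e j := by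
        apply ENNReal.toReal_le_of_le_ofReal (he j)
        refine le_trans (measure_mono hsub) ?_
        rw [Real.volume_Ico]
        exact ENNReal.ofReal_le_ofReal (by linarith)
      calc (volume (Set.Ioo (0:ℝ) 1 ∩ Set.Ici (1 - e j))).toReal • v j
          ≤ e j * v j := by
            rw [smul_eq_mul]; exact mul_le_mul_of_nonneg_right this (hv j)
        _ = v j * e j := mul_comm _ _
  have hgt : g t = (∑ i, w i * (if t < d i then 1 else 0))
      + ∑ j, v j * (if 1 - t ≤ e j then 1 else 0) := by
    simp only [hg]
    congr 1
    · apply Finset.sum_congr rfl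
      intro i _
      simp [Set.indicator_apply, Set.mem_Iio, mul_ite, mul_one, mul_zero]
    · apply Finset.sum_congr rfl
      intro j _
      simp only [Set.indicator_apply, Set.mem_Ici, mul_ite, mul_one, mul_zero]
      congr 1
      simp only [eq_iff_iff]
      constructor <;> intro <;> linarith
  rw [← hgt]
  exact le_trans hle (by rw [havg] at *; exact hbound)

end Aux

/-- Proposition 2.11: if the infimum defining `β(E)` is attained at a pair `(a, b)` whose
ampliations commute with the projection `E`, then `β(E) = γ(E)`. -/
theorem stmt7 {n m : ℕ} (hn : 0 < n) (hm : 0 < m)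
    (φ : Mat n →ₗ[ℂ] ℂ) (ψ : Mat m →ₗ[ℂ] ℂ) (hφ : IsState φ) (hψ : IsState ψ)
    (E : Mat2 n m) (hE : IsProjM E)
    (a : Mat n) (b : Mat m) (ha : a.PosSemidef) (hb : b.PosSemidef)
    (hle : Loewner E (a ⊗ₖ (1 : Mat m) + (1 : Mat n) ⊗ₖ b))
    (hca : E * (a ⊗ₖ (1 : Mat m)) = (a ⊗ₖ (1 : Mat m)) * E)
    (hcb : E * ((1 : Mat n) ⊗ₖ b) = ((1 : Mat n) ⊗ₖ b) * E)
    (hmin : (φ a + ψ b).re = beta φ ψ E) :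
    beta φ ψ E = gamma φ ψ E := by
  classical
  have hA1 : a.IsHermitian := ha.1
  have hB1 : b.IsHermitian := hb.1
  set U : Mat n := (hA1.eigenvectorUnitary : Mat n) with hUdef
  set V : Mat m := (hB1.eigenvectorUnitary : Mat m) with hVdef
  set d : Fin n → ℝ := hA1.eigenvalues with hddef
  set e : Fin m → ℝ := hB1.eigenvalues with hedef
  have hUl : U * Uᴴ = 1 := by
    rw [← Matrix.star_eq_conjTranspose]
    exact Matrix.mem_unitaryGroup_iff.mp hA1.eigenvectorUnitary.2
  have hUr : Uᴴ * U = 1 := by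
    rw [← Matrix.star_eq_conjTranspose]
    exact Matrix.mem_unitaryGroup_iff'.mp hA1.eigenvectorUnitary.2
  have hVl : V * Vᴴ = 1 := by
    rw [← Matrix.star_eq_conjTranspose]
    exact Matrix.mem_unitaryGroup_iff.mp hB1.eigenvectorUnitary.2
  have hVr : Vᴴ * V = 1 := by
    rw [← Matrix.star_eq_conjTranspose]
    exact Matrix.mem_unitaryGroup_iff'.mp hB1.eigenvectorUnitary.2
  have haU : a = cmat U d := hA1.spectral_theorem
  have hbV : b = cmat V e := hB1.spectral_theorem
  have hd0 : ∀ i, 0 ≤ d i := fun i => ha.eigenvalues_nonneg i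
  have he0 : ∀ j, 0 ≤ e j := fun j => hb.eigenvalues_nonneg j
  set W : Mat2 n m := U ⊗ₖ V with hWdef
  have hWl : W * Wᴴ = 1 := kron_unitary_l hUl hVl
  have hWr : Wᴴ * W = 1 := kron_unitary_r hUr hVr
  -- ampliations as conjugated diagonals
  have hampA : a ⊗ₖ (1 : Mat m) = cmat W (fun x => d x.1) := by
    rw [haU, show (1 : Mat m) = cmat V (fun _ => 1) from (cmat_one hVl).symm, cmat_kron,
      show (fun (x : Fin n × Fin m) => d x.1 * 1) = fun x => d x.1 from funext fun x => mul_one _]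
  have hampB : (1 : Mat n) ⊗ₖ b = cmat W (fun x => e x.2) := by
    rw [hbV, show (1 : Mat n) = cmat U (fun _ => 1) from (cmat_one hUl).symm, cmat_kron,
      show (fun (x : Fin n × Fin m) => 1 * e x.2) = fun x => e x.2 from funext fun x => one_mul _]
  -- weights
  set w : Fin n → ℝ := fun i => (φ (cmat U (Pi.single i 1))).re with hwdef
  set v : Fin m → ℝ := fun j => (ψ (cmat V (Pi.single j 1))).re with hvdef
  have hw0 : ∀ i, 0 ≤ w i := by
    intro i
    rw [hwdef]
    simp only
    rw [cmat_single_psd]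
    exact (Complex.le_def.mp (hφ.2 _)).1
  have hv0 : ∀ j, 0 ≤ v j := by
    intro j
    rw [hvdef]
    simp only
    rw [cmat_single_psd]
    exact (Complex.le_def.mp (hψ.2 _)).1
  have hφcmat : ∀ f : Fin n → ℝ, (φ (cmat U f)).re = ∑ i, f i * w i := fun f => state_cmat_re U f
  have hψcmat : ∀ f : Fin m → ℝ, (ψ (cmat V f)).re = ∑ j, f j * v j := fun f => state_cmat_re V f
  have hβval : (φ a + ψ b).re = (∑ i, w i * d i) + ∑ j, v j * e j := by
    rw [Complex.add_re, haU, hbV, hφcmat, hψcmat]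
    congr 1
    · exact Finset.sum_congr rfl fun i _ => mul_comm _ _
    · exact Finset.sum_congr rfl fun j _ => mul_comm _ _
  -- choose threshold
  obtain ⟨t, ⟨ht0, ht1⟩, htle⟩ := exists_threshold w v d e hw0 hv0 hd0 he0
  set s : ℝ := 1 - t with hsdef
  have hs0 : 0 < s := by rw [hsdef]; linarith
  -- projections
  set fp : Fin n → ℝ := fun i => if t < d i then 1 else 0 with hfpdef
  set fq : Fin m → ℝ := fun j => if s ≤ e j then 1 else 0 with hfqdef
  set p : Mat n := cmat U fp with hpdef
  set q : Mat m := cmat V fq with hqdef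
  have hne : (Finset.univ : Finset (Fin m)).Nonempty := ⟨⟨0, hm⟩, Finset.mem_univ _⟩
  set μ : ℝ := Finset.univ.sup' hne (fun j => if e j < s then e j else 0) with hμdef
  have hμs : μ < s := by
    rw [hμdef]
    rw [Finset.sup'_lt_iff]
    intro j _
    split
    · assumption
    · exact hs0
  have hμe : ∀ j, e j < s → e j ≤ μ := by
    intro j hj
    have h := Finset.le_sup' (fun j => if e j < s then e j else 0) (Finset.mem_univ j)
    rw [if_pos hj] at h
    exact h
  -- the corner projection P
  set fP : Fin n × Fin m → ℝ := fun x => (1 - fp x.1) * (1 - fq x.2) with hfPdef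
  set P : Mat2 n m := cmat W fP with hPdef
  -- commutation of E with conjugated diagonals
  have hcommA : E * cmat W (fun x => d x.1) = cmat W (fun x => d x.1) * E := by
    rw [← hampA]; exact hca
  have hcommB : E * cmat W (fun x => e x.2) = cmat W (fun x => e x.2) * E := by
    rw [← hampB]; exact hcb
  have hent1 := entry_eq_of_comm (Wᴴ * E * W) (fun x => ((d x.1 : ℝ) : ℂ))
    (comm_diag_of_comm_cmat hWr E (fun x => d x.1) hcommA)
  have hent2 := entry_eq_of_comm (Wᴴ * E * W) (fun x => ((e x.2 : ℝ) : ℂ))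
    (comm_diag_of_comm_cmat hWr E (fun x => e x.2) hcommB)
  have hEcomm : ∀ h : Fin n × Fin m → ℝ,
      (∀ x y, d x.1 = d y.1 → e x.2 = e y.2 → h x = h y) →
      E * cmat W h = cmat W h * E := by
    intro h hh
    apply comm_cmat_of_comm_diag hWl
    apply diag_comm_of
    intro x y hN
    have e1 : d x.1 = d y.1 := Complex.ofReal_inj.mp (hent1 x y hN)
    have e2 : e x.2 = e y.2 := Complex.ofReal_inj.mp (hent2 x y hN)
    exact congrArg _ (hh x y e1 e2)
  have hEP : E * P = P * E := by
    rw [hPdef]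
    apply hEcomm
    intro x y h1 h2
    rw [hfPdef]
    simp only [hfpdef, hfqdef, h1, h2]
  -- PSD bounds for key_vanish
  have hPAP : ((t : ℂ) • P - P * (a ⊗ₖ (1 : Mat m)) * P).PosSemidef := by
    have hrw : (t : ℂ) • P - P * (a ⊗ₖ (1 : Mat m)) * P
        = cmat W (t • fP - fP * (fun x => d x.1) * fP) := by
      rw [hampA, hPdef, cmat_mul hWr, cmat_mul hWr, cmat_sub, cmat_smul]
    rw [hrw]
    apply cmat_psd
    intro x
    simp only [Pi.sub_apply, Pi.smul_apply, Pi.mul_apply, smul_eq_mul, hfPdef, hfpdef, hfqdef]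
    by_cases h1 : t < d x.1 <;> by_cases h2 : s ≤ e x.2 <;>
      simp [h1, h2] <;> nlinarith [hd0 x.1, he0 x.2]
  have hPBP : ((μ : ℂ) • P - P * ((1 : Mat n) ⊗ₖ b) * P).PosSemidef := by
    have hrw : (μ : ℂ) • P - P * ((1 : Mat n) ⊗ₖ b) * P
        = cmat W (μ • fP - fP * (fun x => e x.2) * fP) := by
      rw [hampB, hPdef, cmat_mul hWr, cmat_mul hWr, cmat_sub, cmat_smul]
    rw [hrw]
    apply cmat_psd
    intro x
    simp only [Pi.sub_apply, Pi.smul_apply, Pi.mul_apply, smul_eq_mul, hfPdef, hfpdef, hfqdef]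
    by_cases h1 : t < d x.1 <;> by_cases h2 : s ≤ e x.2 <;>
      simp [h1, h2] <;> nlinarith [hμe x.2 (by push_neg at h2; exact h2), hμs, hs0]
  have hfPP : fP * fP = fP := by
    funext x
    simp only [Pi.mul_apply, hfPdef, hfpdef, hfqdef]
    split_ifs <;> ring
  have hPP : P * P = P := by
    rw [hPdef, cmat_mul hWr, hfPP]
  have hle' : (a ⊗ₖ (1 : Mat m) + (1 : Mat n) ⊗ₖ b - E).PosSemidef := hle
  have hPE0 : P * E = 0 :=
    key_vanish E P (a ⊗ₖ (1 : Mat m)) ((1 : Mat n) ⊗ₖ b) hEP hPP (cmat_herm W fP) hE.2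
      hle' (t := t) (μ := μ) (by linarith) hPAP hPBP
  have hEP0 : E * P = 0 := by rw [hEP, hPE0]
  -- the projection R
  set fR : Fin n × Fin m → ℝ := fun x => fp x.1 + fq x.2 - fp x.1 * fq x.2 with hfRdef
  set R : Mat2 n m := cmat W fR with hRdef
  have hfR1 : fR = (fun _ => (1:ℝ)) - fP := by
    funext x
    simp only [hfRdef, hfPdef, Pi.sub_apply]
    ring
  have hR1 : R = 1 - P := by rw [hRdef, hfR1, cmat_sub, cmat_one hWl, hPdef]
  have hRE : R * E = E := by rw [hR1, Matrix.sub_mul, Matrix.one_mul, hPE0, sub_zero]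
  have hER : E * R = E := by rw [hR1, Matrix.mul_sub, Matrix.mul_one, hEP0, sub_zero]
  have hRR : R * R = R := by
    have hfRR : fR * fR = fR := by
      funext x
      simp only [Pi.mul_apply, hfRdef, hfpdef, hfqdef]
      split_ifs <;> ring
    rw [hRdef, cmat_mul hWr, hfRR]
  have hkron : p ⊗ₖ (1 : Mat m) + (1 : Mat n) ⊗ₖ q - p ⊗ₖ q = R := by
    have h1 : p ⊗ₖ (1 : Mat m) = cmat W (fun x => fp x.1) := by
      rw [hpdef, show (1 : Mat m) = cmat V (fun _ => 1) from (cmat_one hVl).symm, cmat_kron,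
        show (fun (x : Fin n × Fin m) => fp x.1 * 1) = fun x => fp x.1 from
          funext fun x => mul_one _]
    have h2 : (1 : Mat n) ⊗ₖ q = cmat W (fun x => fq x.2) := by
      rw [hqdef, show (1 : Mat n) = cmat U (fun _ => 1) from (cmat_one hUl).symm, cmat_kron,
        show (fun (x : Fin n × Fin m) => 1 * fq x.2) = fun x => fq x.2 from
          funext fun x => one_mul _]
    have h3 : p ⊗ₖ q = cmat W (fun x => fp x.1 * fq x.2) := by
      rw [hpdef, hqdef, cmat_kron]
    rw [h1, h2, h3, hRdef, ← cmat_add, ← cmat_sub]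
    rfl
  have hLoewner : Loewner E (p ⊗ₖ (1 : Mat m) + (1 : Mat n) ⊗ₖ q - p ⊗ₖ q) := by
    show (_ - E).PosSemidef
    rw [hkron]
    have hid : (R - E) * (R - E) = R - E := by
      rw [Matrix.sub_mul, Matrix.mul_sub, Matrix.mul_sub, hRR, hRE, hER, hE.2]
      abel
    have hherm : (R - E).IsHermitian := by
      show (R - E)ᴴ = R - E
      rw [Matrix.conjTranspose_sub, cmat_herm W fR, hE.1]
    exact proj_psd hherm hid
  have hprojp : IsProjM p := by
    refine ⟨cmat_herm U fp, ?_⟩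
    have hfpp : fp * fp = fp := by
      funext i
      simp only [Pi.mul_apply, hfpdef]
      split_ifs <;> ring
    rw [hpdef, cmat_mul hUr, hfpp]
  have hprojq : IsProjM q := by
    refine ⟨cmat_herm V fq, ?_⟩
    have hfqq : fq * fq = fq := by
      funext j
      simp only [Pi.mul_apply, hfqdef]
      split_ifs <;> ring
    rw [hqdef, cmat_mul hVr, hfqq]
  have hval : (φ p + ψ q).re
      = (∑ i, w i * (if t < d i then 1 else 0)) + ∑ j, v j * (if 1 - t ≤ e j then 1 else 0) := by
    rw [Complex.add_re, hpdef, hqdef, hφcmat, hψcmat]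
    congr 1
    · exact Finset.sum_congr rfl fun i _ => mul_comm _ _
    · apply Finset.sum_congr rfl
      intro j _
      rw [mul_comm]
  have hvle : (φ p + ψ q).re ≤ beta φ ψ E := by
    rw [hval, ← hmin, hβval]
    exact htle
  -- set membership and sInf bookkeeping
  set gset := {r : ℝ | ∃ (p' : Mat n) (q' : Mat m), IsProjM p' ∧ IsProjM q' ∧
      Loewner E (p' ⊗ₖ (1 : Mat m) + (1 : Mat n) ⊗ₖ q' - p' ⊗ₖ q') ∧ (φ p' + ψ q').re = r}
    with hgsetdef
  set bset := {r : ℝ | ∃ (a' : Mat n) (b' : Mat m), a'.PosSemidef ∧ b'.PosSemidef ∧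
      Loewner E (a' ⊗ₖ (1 : Mat m) + (1 : Mat n) ⊗ₖ b') ∧ (φ a' + ψ b').re = r} with hbsetdef
  have hmem : (φ p + ψ q).re ∈ gset := ⟨p, q, hprojp, hprojq, hLoewner, rfl⟩
  have hbddg : BddBelow gset := by
    refine ⟨0, ?_⟩
    rintro r ⟨p', q', hp', hq', _, hr⟩
    rw [← hr, Complex.add_re]
    exact add_nonneg (state_psd_re_nonneg hφ.2 (proj_psd hp'.1 hp'.2))
      (state_psd_re_nonneg hψ.2 (proj_psd hq'.1 hq'.2))
  have hbddb : BddBelow bset := by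
    refine ⟨0, ?_⟩
    rintro r ⟨a', b', ha', hb', _, hr⟩
    rw [← hr, Complex.add_re]
    exact add_nonneg (state_psd_re_nonneg hφ.2 ha') (state_psd_re_nonneg hψ.2 hb')
  have hsub : gset ⊆ bset := by
    rintro r ⟨p', q', hp', hq', hL, hr⟩
    refine ⟨p', q', proj_psd hp'.1 hp'.2, proj_psd hq'.1 hq'.2, ?_, hr⟩
    show (p' ⊗ₖ (1 : Mat m) + (1 : Mat n) ⊗ₖ q' - E).PosSemidef
    have hsplit : p' ⊗ₖ (1 : Mat m) + (1 : Mat n) ⊗ₖ q' - E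
        = (p' ⊗ₖ (1 : Mat m) + (1 : Mat n) ⊗ₖ q' - p' ⊗ₖ q' - E) + p' ⊗ₖ q' := by abel
    rw [hsplit]
    exact Matrix.PosSemidef.add hL (psd_kron (proj_psd hp'.1 hp'.2) (proj_psd hq'.1 hq'.2))
  have hgb : gamma φ ψ E ≤ beta φ ψ E := le_trans (csInf_le hbddg hmem) hvle
  have hbg : beta φ ψ E ≤ gamma φ ψ E := csInf_le_csInf hbddb ⟨_, hmem⟩ hsub
  exact le_antisymm hbg hgb


end
end

section
/- Let n, m be positive integers, let T ∈ M_n ⊗ M_m be a positive semidefinite contraction, write T = (T_{i,j})_{i,j=1}^n as an n×n block matrix with blocks T_{i,j} ∈ M_m, and let ζ = (1/√n)·Σ_{i=1}^n e_i ⊗ e_i ∈ ℂ^n ⊗ ℂ^n, where (e_i) is the standard orthonormal basis of ℂ^n. Then α(T), taken with respect to the normalised traces (tr_n, tr_m), equals the maximum over all unital, completely positive, trace-preserving linear maps Φ : M_m → M_n of ⟨Φ^{(n)}(T)ζ, ζ⟩, where Φ^{(n)}(T) = (Φ(T_{i,j}))_{i,j=1}^n ∈ M_n ⊗ M_n. 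-/
open scoped ComplexOrder Kronecker Matrix
open Filter

noncomputable section

/-- Applying a linear map `Φ : M_m → M_{n'}` entrywise to the blocks of a `k × k` block matrix. -/
def blockApply {k m n' : ℕ} (Φ : Mat m →ₗ[ℂ] Mat n') (M : Mat2 k m) : Mat2 k n' :=
  Matrix.of fun p q => Φ (Matrix.of fun a b => M (p.1, a) (q.1, b)) p.2 q.2

/-- A unital, completely positive, trace-preserving map `Φ : M_m → M_{n'}` (traces normalised). -/
def IsUCPTP {m n' : ℕ} (Φ : Mat m →ₗ[ℂ] Mat n') : Prop :=
  Φ 1 = 1 ∧ (∀ x : Mat m, (Φ x).trace / (n' : ℂ) = x.trace / (m : ℂ)) ∧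
    ∀ k : ℕ, ∀ M : Mat2 k m, M.PosSemidef → (blockApply Φ M).PosSemidef

lemma psd_exists_star_mul {ι : Type*} [Fintype ι] [DecidableEq ι] {M : Matrix ι ι ℂ}
    (hM : M.PosSemidef) : ∃ B : Matrix ι ι ℂ, M = Bᴴ * B := by
  open scoped MatrixOrder in
  exact ⟨CFC.sqrt M, by rw [(Matrix.nonneg_iff_posSemidef.mp (CFC.sqrt_nonneg M)).1.eq, CFC.sqrt_mul_sqrt_self M hM.nonneg]⟩

section auxstate
variable {ι : Type*} [Fintype ι] [DecidableEq ι] {ω : Matrix ι ι ℂ →ₗ[ℂ] ℂ}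

lemma state_nonneg_s12 (hω : IsState ω) {M : Matrix ι ι ℂ} (hM : M.PosSemidef) : 0 ≤ ω M := by
  obtain ⟨B, rfl⟩ := psd_exists_star_mul hM
  exact hω.2 B

lemma state_im (hω : IsState ω) {M : Matrix ι ι ℂ} (hM : M.PosSemidef) : (ω M).im = 0 := by
  have := state_nonneg_s12 hω hM
  rw [Complex.nonneg_iff] at this
  exact this.2.symm

lemma state_star (hω : IsState ω) (M : Matrix ι ι ℂ) :
    ω Mᴴ = (starRingEnd ℂ) (ω M) := by
  have him : ∀ x : Matrix ι ι ℂ, (ω (xᴴ * x)).im = 0 := fun x => by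
    have := hω.2 x
    rw [Complex.nonneg_iff] at this
    exact this.2.symm
  have e1 : (1 + M)ᴴ * (1 + M) = 1 + M + Mᴴ + Mᴴ * M := by
    simp only [Matrix.conjTranspose_add, Matrix.conjTranspose_one, add_mul, mul_add, one_mul,
      mul_one]
    abel
  have e2 : (1 + Complex.I • M)ᴴ * (1 + Complex.I • M)
      = 1 + Complex.I • M - Complex.I • Mᴴ + Mᴴ * M := by
    simp only [Matrix.conjTranspose_add, Matrix.conjTranspose_one, Matrix.conjTranspose_smul,
      Complex.star_def, Complex.conj_I, add_mul, mul_add, one_mul, mul_one, smul_mul_assoc,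
      Matrix.mul_smul, smul_smul, neg_mul, neg_smul, Complex.I_mul_I, neg_neg, one_smul]
    noncomm_ring
  have h1 := him (1 + M)
  have h2 := him (1 + Complex.I • M)
  rw [e1] at h1
  rw [e2] at h2
  simp only [map_add, map_sub, map_smul, hω.1, smul_eq_mul] at h1 h2
  have hMM := him M
  set a := ω M
  set b := ω Mᴴ
  simp only [Complex.add_im, Complex.sub_im, Complex.one_im, Complex.mul_im, Complex.I_re,
    Complex.I_im, hMM, zero_mul, one_mul, zero_add, add_zero, mul_zero] at h1 h2
  apply Complex.ext <;>
    simp only [Complex.conj_re, Complex.conj_im] <;> linarith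

end auxstate

def blockOf {k m : ℕ} (M : Mat2 k m) (p q : Fin k) : Mat m := Matrix.of fun a b => M (p,a) (q,b)

lemma sum_std_kron {n m : ℕ} (M : Mat2 n m) :
    ∑ i : Fin n, ∑ j : Fin n, (Matrix.single i j (1:ℂ)) ⊗ₖ blockOf M i j = M := by
  ext ⟨p,a⟩ ⟨q,b⟩
  simp only [Matrix.sum_apply, Matrix.kroneckerMap_apply, Matrix.single, blockOf,
    Matrix.of_apply, ite_mul, one_mul, zero_mul, ite_and]
  rw [Finset.sum_comm]
  simp

lemma zeta_form {n : ℕ} (ζ : Fin n × Fin n → ℂ)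
    (hζ : ζ = fun p => if p.1 = p.2 then ((Real.sqrt n : ℂ))⁻¹ else 0) (A : Mat2 n n) :
    star ζ ⬝ᵥ A.mulVec ζ = (n:ℂ)⁻¹ * ∑ i : Fin n, ∑ j : Fin n, A (i,i) (j,j) := by
  subst hζ
  by_cases hn : n = 0
  · subst hn; simp [dotProduct]
  have hc : (starRingEnd ℂ) ((Real.sqrt n : ℂ))⁻¹ = ((Real.sqrt n : ℂ))⁻¹ := by
    simp
  have hs : ((Real.sqrt n : ℂ))⁻¹ * ((Real.sqrt n : ℂ))⁻¹ = (n : ℂ)⁻¹ := by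
    rw [← mul_inv]
    norm_cast
    rw [Real.mul_self_sqrt (Nat.cast_nonneg n)]
    norm_num
  simp only [dotProduct, Matrix.mulVec, dotProduct, Pi.star_apply,
    Fintype.sum_prod_type]
  simp only [Complex.star_def, apply_ite (starRingEnd ℂ), map_zero, hc, ite_mul, zero_mul,
    mul_ite, mul_zero]
  simp only [Finset.sum_ite_eq, Finset.mem_univ, if_true, Finset.mul_sum]
  apply Finset.sum_congr rfl; intro i _
  apply Finset.sum_congr rfl; intro j _
  rw [← hs]
  ring

lemma blockOf_add {k m : ℕ} (M N : Mat2 k m) (p q : Fin k) :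
    blockOf (M + N) p q = blockOf M p q + blockOf N p q := by
  ext a b; simp [blockOf]

lemma blockOf_smul {k m : ℕ} (c : ℂ) (M : Mat2 k m) (p q : Fin k) :
    blockOf (c • M) p q = c • blockOf M p q := by
  ext a b; simp [blockOf]

def sigmaOf {n m : ℕ} (Φ : Mat m →ₗ[ℂ] Mat n) : Mat2 n m →ₗ[ℂ] ℂ where
  toFun M := (n:ℂ)⁻¹ * ∑ i : Fin n, ∑ j : Fin n, Φ (blockOf M i j) i j
  map_add' M N := by
    simp only [blockOf_add, map_add, Matrix.add_apply, Finset.sum_add_distrib, mul_add]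
  map_smul' c M := by
    simp only [blockOf_smul, map_smul, Matrix.smul_apply, smul_eq_mul, RingHom.id_apply,
      ← Finset.mul_sum]
    ring

def phiOf {n m : ℕ} (σ : Mat2 n m →ₗ[ℂ] ℂ) : Mat m →ₗ[ℂ] Mat n where
  toFun b := Matrix.of fun i j => (n:ℂ) * σ ((Matrix.single i j (1:ℂ)) ⊗ₖ b)
  map_add' b c := by
    ext i j
    simp [Matrix.kronecker_add, mul_add]
  map_smul' c b := by
    ext i j
    simp [Matrix.kronecker_smul]
    ring

lemma kron_conjT_s12 {l p : ℕ} (A : Mat l) (B : Mat p) : (A ⊗ₖ B)ᴴ = Aᴴ ⊗ₖ Bᴴ := by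
  ext ⟨i,a⟩ ⟨j,b⟩
  simp [Matrix.conjTranspose_apply, mul_comm]

lemma stdBasis_conjT {l : ℕ} (i j : Fin l) :
    (Matrix.single i j (1:ℂ))ᴴ = Matrix.single j i (1:ℂ) := by
  ext p q
  simp [Matrix.conjTranspose_apply, Matrix.single, and_comm]

lemma sum_stdBasis_diag {l : ℕ} : ∑ i : Fin l, Matrix.single i i (1:ℂ) = 1 := by
  ext p q
  simp only [Matrix.sum_apply, Matrix.single, Matrix.of_apply, Matrix.one_apply]
  rcases eq_or_ne p q with h | h
  · subst h; rw [Finset.sum_eq_single p] <;> simp +contextual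
  · rw [Finset.sum_eq_zero, if_neg h]
    intro i _
    rw [if_neg]
    rintro ⟨rfl, rfl⟩
    exact h rfl


lemma zeta_blockApply {n m : ℕ} (Φ : Mat m →ₗ[ℂ] Mat n) (ζ : Fin n × Fin n → ℂ)
    (hζ : ζ = fun p => if p.1 = p.2 then ((Real.sqrt n : ℂ))⁻¹ else 0) (M : Mat2 n m) :
    star ζ ⬝ᵥ (blockApply Φ M).mulVec ζ = sigmaOf Φ M := by
  rw [zeta_form ζ hζ]
  rfl

lemma blockOf_kron_one {n m : ℕ} (a : Mat n) (i j : Fin n) :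
    blockOf (a ⊗ₖ (1 : Mat m)) i j = a i j • (1 : Mat m) := by
  ext x y; simp [blockOf]

lemma blockOf_one_kron {n m : ℕ} (b : Mat m) (i j : Fin n) :
    blockOf ((1 : Mat n) ⊗ₖ b) i j = (1 : Mat n) i j • b := by
  ext x y; simp [blockOf]

lemma ntr_apply {k : ℕ} (a : Mat k) : ntr k a = (k : ℂ)⁻¹ * a.trace := by
  simp [ntr]

lemma sigmaOf_coupling {n m : ℕ} (hn : 0 < n) (hm : 0 < m) {Φ : Mat m →ₗ[ℂ] Mat n}
    (hΦ : IsUCPTP Φ) : IsCoupling (ntr n) (ntr m) (sigmaOf Φ) := by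
  have hmarg1 : ∀ a : Mat n, sigmaOf Φ (a ⊗ₖ (1 : Mat m)) = ntr n a := by
    intro a
    show (n:ℂ)⁻¹ * ∑ i : Fin n, ∑ j : Fin n, Φ (blockOf (a ⊗ₖ (1 : Mat m)) i j) i j = _
    simp only [blockOf_kron_one, map_smul, hΦ.1, Matrix.smul_apply, Matrix.one_apply,
      smul_eq_mul, mul_ite, mul_one, mul_zero]
    rw [ntr_apply]
    congr 1
    simp [Matrix.trace, Matrix.diag]
  have hmarg2 : ∀ b : Mat m, sigmaOf Φ ((1 : Mat n) ⊗ₖ b) = ntr m b := by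
    intro b
    show (n:ℂ)⁻¹ * ∑ i : Fin n, ∑ j : Fin n, Φ (blockOf ((1 : Mat n) ⊗ₖ b) i j) i j = _
    simp only [blockOf_one_kron, map_smul, Matrix.smul_apply, Matrix.one_apply, smul_eq_mul,
      ite_mul, one_mul, zero_mul, Finset.sum_ite_eq, Finset.mem_univ, if_true]
    have := hΦ.2.1 b
    rw [ntr_apply, div_eq_div_iff (by exact_mod_cast hn.ne') (by exact_mod_cast hm.ne')] at *
    have h2 : ∑ i : Fin n, Φ b i i = (Φ b).trace := by simp [Matrix.trace, Matrix.diag]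
    rw [h2]
    field_simp at this ⊢
    linear_combination this
  refine ⟨⟨?_, ?_⟩, hmarg1, hmarg2⟩
  · rw [← Matrix.one_kronecker_one (α := ℂ) (m := Fin n) (n := Fin m), hmarg2, ntr_apply]
    simp [Matrix.trace]
    rw [mul_comm, mul_inv_cancel₀ (by exact_mod_cast hm.ne')]
  · intro x
    have hpsd := hΦ.2.2 n (xᴴ * x) (Matrix.posSemidef_conjTranspose_mul_self x)
    have := hpsd.dotProduct_mulVec_nonneg (fun p => if p.1 = p.2 then ((Real.sqrt n : ℂ))⁻¹ else 0)
    rwa [zeta_blockApply Φ _ rfl] at this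

lemma phiOf_eval {n m : ℕ} (hn : 0 < n) (σ : Mat2 n m →ₗ[ℂ] ℂ) (M : Mat2 n m) :
    sigmaOf (phiOf σ) M = σ M := by
  show (n:ℂ)⁻¹ * ∑ i : Fin n, ∑ j : Fin n, phiOf σ (blockOf M i j) i j = σ M
  have : ∀ i j : Fin n, phiOf σ (blockOf M i j) i j
      = (n:ℂ) * σ ((Matrix.single i j (1:ℂ)) ⊗ₖ blockOf M i j) := fun i j => rfl
  simp only [this, ← Finset.mul_sum]
  rw [← mul_assoc, inv_mul_cancel₀ (by exact_mod_cast hn.ne'), one_mul]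
  calc ∑ i : Fin n, ∑ j : Fin n, σ ((Matrix.single i j (1:ℂ)) ⊗ₖ blockOf M i j)
      = σ (∑ i : Fin n, ∑ j : Fin n, (Matrix.single i j (1:ℂ)) ⊗ₖ blockOf M i j) := by
        rw [map_sum]
        exact Finset.sum_congr rfl fun i _ => (map_sum σ _ Finset.univ).symm
    _ = σ M := by rw [sum_std_kron]


def Cmat {k n m : ℕ} (v : Fin k × Fin n → ℂ) (M : Mat2 k m) : Mat2 n m :=
  Matrix.of fun P Q => ∑ p : Fin k, ∑ q : Fin k,
    (starRingEnd ℂ) (v (p, P.1)) * v (q, Q.1) * M (p, P.2) (q, Q.2)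

lemma Cmat_eq_sum {k n m : ℕ} (v : Fin k × Fin n → ℂ) (M : Mat2 k m) :
    Cmat v M = ∑ p : Fin k, ∑ q : Fin k, ∑ i : Fin n, ∑ j : Fin n,
      ((starRingEnd ℂ) (v (p,i)) * v (q,j)) •
        ((Matrix.single i j (1:ℂ)) ⊗ₖ blockOf M p q) := by
  ext ⟨i',a⟩ ⟨j',b⟩
  simp only [Cmat, Matrix.of_apply, Matrix.sum_apply, Matrix.smul_apply,
    Matrix.kroneckerMap_apply, Matrix.single, Matrix.of_apply, blockOf, ite_and,
    smul_eq_mul, mul_ite, mul_zero, mul_one, ite_mul, zero_mul]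
  apply Finset.sum_congr rfl; intro p _
  apply Finset.sum_congr rfl; intro q _
  rw [Finset.sum_eq_single i' (fun x _ hx => by simp [hx]) (by simp),
    Finset.sum_eq_single j' (fun x _ hx => by simp [hx]) (by simp)]
  simp

lemma quad_eq {k n m : ℕ} (σ : Mat2 n m →ₗ[ℂ] ℂ) (v : Fin k × Fin n → ℂ) (M : Mat2 k m) :
    star v ⬝ᵥ (blockApply (phiOf σ) M).mulVec v = (n:ℂ) * σ (Cmat v M) := by
  rw [Cmat_eq_sum]
  simp only [map_sum, map_smul, smul_eq_mul, Finset.mul_sum]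
  have hlhs : star v ⬝ᵥ (blockApply (phiOf σ) M).mulVec v
      = ∑ p : Fin k, ∑ i : Fin n, ∑ q : Fin k, ∑ j : Fin n,
        (starRingEnd ℂ) (v (p,i)) *
          (((n:ℂ) * σ ((Matrix.single i j (1:ℂ)) ⊗ₖ blockOf M p q)) * v (q,j)) := by
    simp only [dotProduct, Matrix.mulVec, Pi.star_apply, Complex.star_def,
      Fintype.sum_prod_type, Finset.mul_sum]
    rfl
  rw [hlhs]
  apply Finset.sum_congr rfl; intro p _
  rw [Finset.sum_comm]
  apply Finset.sum_congr rfl; intro q _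
  apply Finset.sum_congr rfl; intro i _
  apply Finset.sum_congr rfl; intro j _
  ring

set_option maxHeartbeats 1000000 in
lemma Cmat_psd {k n m : ℕ} (v : Fin k × Fin n → ℂ) {M : Mat2 k m} (hM : M.PosSemidef) :
    (Cmat v M).PosSemidef := by
  obtain ⟨B, rfl⟩ := psd_exists_star_mul hM
  set W : Fin k × Fin m → Matrix (Fin 1) (Fin n × Fin m) ℂ :=
    fun t => Matrix.of fun _ P => ∑ p : Fin k, v (p, P.1) * B t (p, P.2) with hW
  have key : Cmat v (Bᴴ * B) = ∑ t : Fin k × Fin m, (W t)ᴴ * W t := by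
    ext ⟨i,a⟩ ⟨j,b⟩
    have hR : ∀ t : Fin k × Fin m, ((W t)ᴴ * W t) (i,a) (j,b)
        = ∑ p : Fin k, ∑ q : Fin k, ((starRingEnd ℂ) (v (p,i)) * v (q,j)) *
            ((starRingEnd ℂ) (B t (p,a)) * B t (q,b)) := by
      intro t
      simp only [hW, Matrix.mul_apply, Matrix.conjTranspose_apply, Matrix.of_apply,
        Fin.sum_univ_one, Complex.star_def, map_sum, map_mul, Finset.sum_mul_sum]
      apply Finset.sum_congr rfl; intro p _
      apply Finset.sum_congr rfl; intro q _
      ring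
    have hL : (Cmat v (Bᴴ * B)) (i,a) (j,b)
        = ∑ p : Fin k, ∑ q : Fin k, ∑ t : Fin k × Fin m,
            ((starRingEnd ℂ) (v (p,i)) * v (q,j)) *
              ((starRingEnd ℂ) (B t (p,a)) * B t (q,b)) := by
      simp only [Cmat, Matrix.of_apply, Matrix.mul_apply, Matrix.conjTranspose_apply,
        Complex.star_def, Finset.mul_sum]
    rw [Matrix.sum_apply]
    simp only [hR]
    rw [hL]
    trans ∑ p : Fin k, ∑ t : Fin k × Fin m, ∑ q : Fin k,
        ((starRingEnd ℂ) (v (p,i)) * v (q,j)) * ((starRingEnd ℂ) (B t (p,a)) * B t (q,b))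
    · exact Finset.sum_congr rfl fun p _ => Finset.sum_comm
    · exact Finset.sum_comm
  rw [key]
  apply Finset.sum_induction _ _ (fun a b ha hb => ha.add hb) Matrix.PosSemidef.zero
  intro t _
  exact Matrix.posSemidef_conjTranspose_mul_self _

lemma phiOf_ucptp {n m : ℕ} (hn : 0 < n) (hm : 0 < m) {σ : Mat2 n m →ₗ[ℂ] ℂ}
    (hσ : IsCoupling (ntr n) (ntr m) σ) : IsUCPTP (phiOf σ) := by
  obtain ⟨hst, hm1, hm2⟩ := hσ
  refine ⟨?_, ?_, ?_⟩
  · ext i j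
    show (n:ℂ) * σ ((Matrix.single i j (1:ℂ)) ⊗ₖ (1 : Mat m)) = (1 : Mat n) i j
    rw [hm1, ntr_apply, ← mul_assoc, mul_inv_cancel₀ (by exact_mod_cast hn.ne'), one_mul]
    simp [Matrix.trace, Matrix.diag, Matrix.single, Matrix.one_apply, ite_and]
    rcases eq_or_ne i j with rfl | h
    · simp
    · simp [h, Ne.symm h]
  · intro b
    have htr : (phiOf σ b).trace = ∑ i : Fin n, (n:ℂ) * σ ((Matrix.single i i (1:ℂ)) ⊗ₖ b) := by
      simp [Matrix.trace, Matrix.diag, phiOf]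
    have hsum : ∑ i : Fin n, σ ((Matrix.single i i (1:ℂ)) ⊗ₖ b) = σ ((1 : Mat n) ⊗ₖ b) := by
      rw [← map_sum]
      congr 1
      rw [← sum_stdBasis_diag (l := n)]
      ext ⟨p,x⟩ ⟨q,y⟩
      simp [Matrix.sum_apply, Finset.sum_mul]
    rw [htr, ← Finset.mul_sum, hsum, hm2, ntr_apply]
    field_simp
  · intro k M hMpsd
    have hstar : ∀ X : Mat2 n m, σ Xᴴ = (starRingEnd ℂ) (σ X) := state_star hst
    refine Matrix.PosSemidef.of_dotProduct_mulVec_nonneg ?_ ?_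
    · show (blockApply (phiOf σ) M)ᴴ = blockApply (phiOf σ) M
      ext ⟨p,i⟩ ⟨q,j⟩
      rw [Matrix.conjTranspose_apply]
      have h1 : (blockApply (phiOf σ) M) (q,j) (p,i)
          = (n:ℂ) * σ ((Matrix.single j i (1:ℂ)) ⊗ₖ blockOf M q p) := rfl
      have h2 : (blockApply (phiOf σ) M) (p,i) (q,j)
          = (n:ℂ) * σ ((Matrix.single i j (1:ℂ)) ⊗ₖ blockOf M p q) := rfl
      have hblock : (blockOf M q p)ᴴ = blockOf M p q := by
        ext a b
        have h3 := congrFun (congrFun hMpsd.1 (p,a)) (q,b)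
        rw [Matrix.conjTranspose_apply] at h3
        rw [Matrix.conjTranspose_apply]
        simp only [blockOf, Matrix.of_apply]
        exact h3
      have hkey : ((Matrix.single j i (1:ℂ)) ⊗ₖ blockOf M q p)ᴴ
          = (Matrix.single i j (1:ℂ)) ⊗ₖ blockOf M p q := by
        rw [kron_conjT_s12, stdBasis_conjT, hblock]
      rw [h1, h2, Complex.star_def, map_mul, ← hstar, hkey]
      simp
    · intro x
      rw [quad_eq]
      have h0 : (0:ℂ) ≤ (n:ℂ) := by
        rw [Complex.nonneg_iff]; simp
      exact mul_nonneg h0 (state_nonneg_s12 hst (Cmat_psd x hMpsd))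



def fromMat {n m : ℕ} (c : Mat2 n m) : Mat2 n m →ₗ[ℂ] ℂ where
  toFun M := ∑ P : Fin n × Fin m, ∑ Q : Fin n × Fin m, c P Q * M P Q
  map_add' M N := by
    simp [Matrix.add_apply, mul_add, Finset.sum_add_distrib]
  map_smul' r M := by
    simp only [Matrix.smul_apply, smul_eq_mul, RingHom.id_apply]
    rw [Finset.mul_sum]
    apply Finset.sum_congr rfl; intro P _
    rw [Finset.mul_sum]
    apply Finset.sum_congr rfl; intro Q _
    ring

lemma fromMat_std {n m : ℕ} (c : Mat2 n m) (P Q : Fin n × Fin m) :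
    fromMat c (Matrix.single P Q 1) = c P Q := by
  show (∑ P' : Fin n × Fin m, ∑ Q' : Fin n × Fin m,
    c P' Q' * Matrix.single P Q 1 P' Q') = c P Q
  simp only [Matrix.single, Matrix.of_apply, mul_ite, mul_one, mul_zero, ite_and]
  rw [Finset.sum_eq_single P (fun x _ hx => by simp [Ne.symm hx]) (by simp),
    Finset.sum_eq_single Q (fun x _ hx => by simp [Ne.symm hx]) (by simp)]
  simp

lemma fromMat_eq {n m : ℕ} (σ : Mat2 n m →ₗ[ℂ] ℂ) :
    fromMat (Matrix.of fun P Q => σ (Matrix.single P Q 1)) = σ := by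
  apply LinearMap.ext; intro M
  show (∑ P : Fin n × Fin m, ∑ Q : Fin n × Fin m,
    σ (Matrix.single P Q 1) * M P Q) = σ M
  conv_rhs => rw [Matrix.matrix_eq_sum_single M]
  rw [map_sum]
  apply Finset.sum_congr rfl; intro P _
  rw [map_sum]
  apply Finset.sum_congr rfl; intro Q _
  have h : Matrix.single P Q (M P Q) = M P Q • Matrix.single P Q (1:ℂ) := by
    rw [Matrix.smul_single, smul_eq_mul, mul_one]
  rw [h, map_smul]
  simp [mul_comm]

lemma fromMat_continuous {n m : ℕ} (M : Mat2 n m) :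
    Continuous fun c : Mat2 n m => fromMat c M := by
  have h : (fun c : Mat2 n m => fromMat c M)
      = fun c : Mat2 n m => ∑ P : Fin n × Fin m, ∑ Q : Fin n × Fin m, c P Q * M P Q := rfl
  rw [h]
  refine continuous_finset_sum _ fun P _ => continuous_finset_sum _ fun Q _ => ?_
  exact (continuous_id.matrix_elem P Q).mul continuous_const

lemma psd_outer {ι : Type*} [Fintype ι] [DecidableEq ι] (u : ι → ℂ) :
    (Matrix.of fun x y => (starRingEnd ℂ) (u x) * u y).PosSemidef := by
  have h : (Matrix.of fun x y => (starRingEnd ℂ) (u x) * u y)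
      = (Matrix.of fun (_ : Fin 1) (x : ι) => u x)ᴴ
        * (Matrix.of fun (_ : Fin 1) (x : ι) => u x) := by
    ext x y
    simp [Matrix.mul_apply, Matrix.conjTranspose_apply]
  rw [h]
  exact Matrix.posSemidef_conjTranspose_mul_self _

lemma isClosed_nonnegC : IsClosed {z : ℂ | 0 ≤ z} := by
  have h : {z : ℂ | 0 ≤ z} = Complex.re ⁻¹' (Set.Ici 0) ∩ Complex.im ⁻¹' {0} := by
    ext z
    simp only [Set.mem_setOf_eq, Set.mem_inter_iff, Set.mem_preimage, Set.mem_Ici,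
      Set.mem_singleton_iff, Complex.nonneg_iff]
    tauto
  rw [h]
  exact (isClosed_Ici.preimage Complex.continuous_re).inter
    (isClosed_singleton.preimage Complex.continuous_im)

lemma stdBasis_conjT' {ι : Type*} [Fintype ι] [DecidableEq ι] (i j : ι) :
    (Matrix.single i j (1:ℂ))ᴴ = Matrix.single j i (1:ℂ) := by
  ext p q
  simp [Matrix.conjTranspose_apply, Matrix.single, and_comm]

lemma state_diag_mem {ι : Type*} [Fintype ι] [DecidableEq ι] {ω : Matrix ι ι ℂ →ₗ[ℂ] ℂ}
    (hω : IsState ω) (P : ι) : 0 ≤ ω (Matrix.single P P 1)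
      ∧ (ω (Matrix.single P P 1)).re ≤ 1 := by
  have h1 : (Matrix.single P P (1:ℂ)).PosSemidef := by
    have h : Matrix.single P P (1:ℂ)
        = Matrix.of fun x y =>
            (starRingEnd ℂ) (if x = P then 1 else 0) * (if y = P then 1 else 0) := by
      ext x y
      by_cases hx : P = x <;> by_cases hy : P = y <;>
        simp [Matrix.single, ite_and, apply_ite (starRingEnd ℂ), hx, hy, eq_comm]
    rw [h]; exact psd_outer _
  have h2 : ((1 : Matrix ι ι ℂ) - Matrix.single P P 1).PosSemidef := by
    have h : (1 : Matrix ι ι ℂ) - Matrix.single P P 1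
        = Matrix.diagonal (fun x => if x = P then 0 else 1) := by
      ext x y
      rcases eq_or_ne x y with rfl | hxy
      · simp [Matrix.single, Matrix.one_apply, Matrix.diagonal, ite_and, eq_comm]
        split <;> norm_num
      · rw [Matrix.sub_apply, Matrix.one_apply_ne hxy, Matrix.diagonal_apply_ne _ hxy]
        simp only [Matrix.single, Matrix.of_apply]
        rw [if_neg]
        · ring
        · rintro ⟨rfl, rfl⟩; exact hxy rfl
    rw [h]
    refine Matrix.posSemidef_diagonal_iff.mpr fun i => ?_
    split <;> simp
  refine ⟨state_nonneg_s12 hω h1, ?_⟩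
  have h3 := state_nonneg_s12 hω h2
  rw [map_sub, hω.1, Complex.nonneg_iff] at h3
  have h4 := h3.1
  simp only [Complex.sub_re, Complex.one_re] at h4
  linarith

lemma state_entry_bound {ι : Type*} [Fintype ι] [DecidableEq ι] {ω : Matrix ι ι ℂ →ₗ[ℂ] ℂ}
    (hω : IsState ω) (P Q : ι) : ‖ω (Matrix.single P Q 1)‖ ≤ 2 := by
  rcases eq_or_ne P Q with rfl | hPQ
  · obtain ⟨h0, h1⟩ := state_diag_mem hω P
    rw [Complex.nonneg_iff] at h0
    calc ‖ω (Matrix.single P P 1)‖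
        ≤ |(ω (Matrix.single P P 1)).re| + |(ω (Matrix.single P P 1)).im| :=
          Complex.norm_le_abs_re_add_abs_im _
      _ ≤ 2 := by
          rw [← h0.2, abs_of_nonneg h0.1]
          simp only [abs_zero, add_zero]
          linarith
  · set z := ω (Matrix.single P Q 1) with hz
    have hzc : ω (Matrix.single Q P 1) = (starRingEnd ℂ) z := by
      rw [hz, ← state_star hω, stdBasis_conjT']
    have key : ∀ θ : ℂ, (starRingEnd ℂ) θ * θ = 1 →
        0 ≤ ω (Matrix.single P P 1) + ω (Matrix.single Q Q 1)
          + (θ * z + (starRingEnd ℂ) (θ * z)) := by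
      intro θ hθ
      have hpsd := psd_outer (fun x => if P = x then 1 else if Q = x then θ else 0)
      have hexp : (Matrix.of fun x y =>
            (starRingEnd ℂ) (if P = x then 1 else if Q = x then θ else 0)
              * (if P = y then 1 else if Q = y then θ else 0))
          = Matrix.single P P 1 + Matrix.single Q Q 1
            + θ • Matrix.single P Q 1
            + (starRingEnd ℂ) θ • Matrix.single Q P 1 := by
        ext x y
        by_cases hx : P = x <;> by_cases hxq : Q = x <;> by_cases hy : P = y <;>
          by_cases hyq : Q = y
        all_goals try { exact absurd (hx.trans hxq.symm) hPQ }
        all_goals try { exact absurd (hy.trans hyq.symm) hPQ }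
        all_goals try subst hx
        all_goals try subst hxq
        all_goals try subst hy
        all_goals try subst hyq
        all_goals simp_all [Matrix.single, ite_and]
      have h := state_nonneg_s12 hω hpsd
      rw [hexp] at h
      simp only [map_add, map_smul, smul_eq_mul, hzc, ← hz] at h
      have heq : ω (Matrix.single P P 1) + ω (Matrix.single Q Q 1)
          + (θ * z + (starRingEnd ℂ) (θ * z))
          = ω (Matrix.single P P 1) + ω (Matrix.single Q Q 1)
          + θ * z + (starRingEnd ℂ) θ * (starRingEnd ℂ) z := by
        rw [map_mul]; ring
      rw [heq]
      exact h
    have k1 := key 1 (by simp)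
    have k2 := key (-1) (by simp)
    have k3 := key Complex.I (by simp [Complex.conj_I])
    have k4 := key (-Complex.I) (by simp [Complex.conj_I])
    obtain ⟨hd0, hd1⟩ := state_diag_mem hω P
    obtain ⟨he0, he1⟩ := state_diag_mem hω Q
    rw [Complex.nonneg_iff] at k1 k2 k3 k4 hd0 he0
    have k1' := k1.1
    have k2' := k2.1
    have k3' := k3.1
    have k4' := k4.1
    simp only [Complex.add_re, Complex.mul_re, Complex.conj_re, Complex.conj_im, Complex.one_re,
      Complex.one_im, Complex.neg_re, Complex.neg_im, Complex.I_re, Complex.I_im,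
      Complex.mul_im] at k1' k2' k3' k4'
    calc ‖z‖ ≤ |z.re| + |z.im| := Complex.norm_le_abs_re_add_abs_im _
      _ ≤ 1 + 1 := by
          gcongr <;> rw [abs_le] <;> constructor <;> nlinarith [hd0.1, he0.1, hd1, he1]
      _ = 2 := by norm_num


lemma trivial_coupling {n m : ℕ} (hn : 0 < n) (hm : 0 < m) :
    IsCoupling (ntr n) (ntr m)
      ((((n*m : ℕ) : ℂ))⁻¹ • Matrix.traceLinearMap (Fin n × Fin m) ℂ ℂ) := by
  have hnm : ((n*m : ℕ) : ℂ) ≠ 0 := by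
    exact_mod_cast (Nat.mul_pos hn hm).ne'
  refine ⟨⟨?_, ?_⟩, ?_, ?_⟩
  · show ((n*m : ℕ) : ℂ)⁻¹ • (Matrix.trace (1 : Mat2 n m)) = 1
    rw [Matrix.trace_one]
    simp only [smul_eq_mul]
    rw [show ((Fintype.card (Fin n × Fin m) : ℂ)) = ((n*m : ℕ) : ℂ) by simp]
    exact inv_mul_cancel₀ hnm
  · intro x
    show (0:ℂ) ≤ ((n*m : ℕ) : ℂ)⁻¹ • (Matrix.trace (xᴴ * x))
    have htr : Matrix.trace (xᴴ * x)
        = ∑ Q : Fin n × Fin m, ∑ P : Fin n × Fin m, star (x P Q) * x P Q := by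
      simp [Matrix.trace, Matrix.diag, Matrix.mul_apply, Matrix.conjTranspose_apply]
    rw [htr, smul_eq_mul]
    have h1 : (0:ℂ) ≤ ((n*m : ℕ) : ℂ)⁻¹ := by
      have e : ((n*m : ℕ) : ℂ)⁻¹ = ((((n*m : ℕ) : ℝ)⁻¹ : ℝ) : ℂ) := by
        rw [Complex.ofReal_inv]
        norm_num
      rw [e, Complex.nonneg_iff]
      refine ⟨?_, (Complex.ofReal_im _).symm⟩
      simp only [Complex.ofReal_re]
      positivity
    refine mul_nonneg h1 (Finset.sum_nonneg fun Q _ => Finset.sum_nonneg fun P _ => ?_)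
    exact star_mul_self_nonneg _
  · intro a
    show ((n*m : ℕ) : ℂ)⁻¹ • (Matrix.trace (a ⊗ₖ (1 : Mat m))) = ntr n a
    rw [Matrix.trace_kronecker, Matrix.trace_one, ntr_apply, smul_eq_mul]
    rw [show ((Fintype.card (Fin m) : ℂ)) = (m : ℂ) by simp]
    have hn' : (n : ℂ) ≠ 0 := by exact_mod_cast hn.ne'
    have hm' : (m : ℂ) ≠ 0 := by exact_mod_cast hm.ne'
    field_simp
    push_cast
    ring
  · intro b
    show ((n*m : ℕ) : ℂ)⁻¹ • (Matrix.trace ((1 : Mat n) ⊗ₖ b)) = ntr m b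
    rw [Matrix.trace_kronecker, Matrix.trace_one, ntr_apply, smul_eq_mul]
    rw [show ((Fintype.card (Fin n) : ℂ)) = (n : ℂ) by simp]
    have hn' : (n : ℂ) ≠ 0 := by exact_mod_cast hn.ne'
    have hm' : (m : ℂ) ≠ 0 := by exact_mod_cast hm.ne'
    field_simp
    push_cast
    ring

lemma alpha_set_isCompact {n m : ℕ} (hn : 0 < n) (hm : 0 < m) (T : Mat2 n m) :
    IsCompact {r : ℝ | ∃ σ, IsCoupling (ntr n) (ntr m) σ ∧ (σ T).re = r} := by
  set K : Set (Mat2 n m) := {c | IsCoupling (ntr n) (ntr m) (fromMat c)} with hK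
  have himg : {r : ℝ | ∃ σ, IsCoupling (ntr n) (ntr m) σ ∧ (σ T).re = r}
      = (fun c : Mat2 n m => ((fromMat c) T).re) '' K := by
    ext r
    constructor
    · rintro ⟨σ, hσ, hr⟩
      refine ⟨Matrix.of fun P Q => σ (Matrix.single P Q 1), ?_, ?_⟩
      · show IsCoupling (ntr n) (ntr m) (fromMat _)
        rw [fromMat_eq σ]; exact hσ
      · show ((fromMat _) T).re = r
        rw [fromMat_eq σ]; exact hr
    · rintro ⟨c, hc, hr⟩
      exact ⟨fromMat c, hc, hr⟩
  rw [himg]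
  have hKclosed : IsClosed K := by
    have h1 : K = ((fun c : Mat2 n m => fromMat c 1) ⁻¹' {1}) ∩
        ((⋂ x : Mat2 n m, (fun c : Mat2 n m => fromMat c (xᴴ * x)) ⁻¹' {z : ℂ | 0 ≤ z}) ∩
        ((⋂ a : Mat n, (fun c : Mat2 n m => fromMat c (a ⊗ₖ (1 : Mat m))) ⁻¹' {ntr n a}) ∩
        (⋂ b : Mat m, (fun c : Mat2 n m => fromMat c ((1 : Mat n) ⊗ₖ b)) ⁻¹' {ntr m b}))) := by
      ext c
      simp only [hK, Set.mem_setOf_eq, IsCoupling, IsState, Set.mem_inter_iff, Set.mem_preimage,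
        Set.mem_singleton_iff, Set.mem_iInter]
      tauto
    rw [h1]
    refine (isClosed_singleton.preimage (fromMat_continuous _)).inter (IsClosed.inter ?_ (IsClosed.inter ?_ ?_))
    · exact isClosed_iInter fun x => isClosed_nonnegC.preimage (fromMat_continuous _)
    · exact isClosed_iInter fun a => isClosed_singleton.preimage (fromMat_continuous _)
    · exact isClosed_iInter fun b => isClosed_singleton.preimage (fromMat_continuous _)
  have hBox : IsCompact {c : Mat2 n m | ∀ P Q, ‖c P Q‖ ≤ 2} := by
    have h2 : {c : Mat2 n m | ∀ P Q, ‖c P Q‖ ≤ 2}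
        = (Set.univ : Set (Fin n × Fin m)).pi (fun _ => (Set.univ : Set (Fin n × Fin m)).pi
            (fun _ => Metric.closedBall (0:ℂ) 2)) := by
      ext c
      constructor
      · intro h P _ Q _
        show c P Q ∈ Metric.closedBall (0:ℂ) 2
        rw [Metric.mem_closedBall, dist_zero_right]
        exact h P Q
      · intro h P Q
        have h2 := h P (Set.mem_univ P) Q (Set.mem_univ Q)
        rwa [Metric.mem_closedBall, dist_zero_right] at h2
    rw [h2]
    exact isCompact_univ_pi fun P => isCompact_univ_pi fun Q => isCompact_closedBall 0 2
  have hsub : K ⊆ {c : Mat2 n m | ∀ P Q, ‖c P Q‖ ≤ 2} := by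
    intro c hc P Q
    rw [← fromMat_std c P Q]
    exact state_entry_bound hc.1 P Q
  have hKcompact : IsCompact K := IsCompact.of_isClosed_subset hBox hKclosed hsub
  exact hKcompact.image (Complex.continuous_re.comp (fromMat_continuous T))

/-- Proposition 3.5: with respect to the normalised traces,
`α(T) = max{⟨Φ⁽ⁿ⁾(T)ζ, ζ⟩ : Φ : M_m → M_n a unital cptp map}`,
where `ζ = (1/√n) ∑ᵢ eᵢ ⊗ eᵢ`. -/
theorem stmt12 {n m : ℕ} (hn : 0 < n) (hm : 0 < m)
    (T : Mat2 n m) (hT : T.PosSemidef) (hT1 : Loewner T 1)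
    (ζ : Fin n × Fin n → ℂ)
    (hζ : ζ = fun p => if p.1 = p.2 then ((Real.sqrt n : ℂ))⁻¹ else 0) :
    IsGreatest {r : ℝ | ∃ Φ : Mat m →ₗ[ℂ] Mat n, IsUCPTP Φ ∧
        (star ζ ⬝ᵥ (blockApply Φ T).mulVec ζ).re = r}
      (alpha (ntr n) (ntr m) T) := by
  have hset : {r : ℝ | ∃ Φ : Mat m →ₗ[ℂ] Mat n, IsUCPTP Φ ∧
        (star ζ ⬝ᵥ (blockApply Φ T).mulVec ζ).re = r}
      = {r : ℝ | ∃ σ, IsCoupling (ntr n) (ntr m) σ ∧ (σ T).re = r} := by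
    ext r
    constructor
    · rintro ⟨Φ, hΦ, hr⟩
      refine ⟨sigmaOf Φ, sigmaOf_coupling hn hm hΦ, ?_⟩
      rw [← zeta_blockApply Φ ζ hζ T]
      exact hr
    · rintro ⟨σ, hσ, hr⟩
      refine ⟨phiOf σ, phiOf_ucptp hn hm hσ, ?_⟩
      rw [zeta_blockApply _ ζ hζ, phiOf_eval hn]
      exact hr
  rw [hset]
  have hcomp := alpha_set_isCompact hn hm T
  have hne : {r : ℝ | ∃ σ, IsCoupling (ntr n) (ntr m) σ ∧ (σ T).re = r}.Nonempty :=
    ⟨_, _, trivial_coupling hn hm, rfl⟩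
  have halpha : alpha (ntr n) (ntr m) T
      = sSup {r : ℝ | ∃ σ, IsCoupling (ntr n) (ntr m) σ ∧ (σ T).re = r} := rfl
  rw [halpha]
  exact ⟨hcomp.sSup_mem hne, fun r hr => le_csSup hcomp.bddAbove hr⟩

end
end

section
/- Let n be a positive integer and let ξ ∈ ℂ^n ⊗ ℂ^n be a unit vector with Schmidt decomposition ξ = Σ_{i=1}^n λ_i e_i ⊗ f_i, where λ_i ≥ 0 and (e_i)_{i=1}^n, (f_i)_{i=1}^n are orthonormal bases of ℂ^n. Then α(E_ξ), taken with respect to the normalised traces (tr_n, tr_n), satisfies α(E_ξ) ≥ (1/n)·(Σ_{i=1}^n λ_i)² ≥ 1/n. Moreover, if n = 2 then α(E_ξ) = (1/2)·(λ₁ + λ₂)². -/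
open scoped ComplexOrder Kronecker Matrix
open Filter

noncomputable section

/-- Kronecker (tensor) product of vectors. -/
def vecKron {n m : ℕ} (u : Fin n → ℂ) (v : Fin m → ℂ) : Fin n × Fin m → ℂ :=
  fun p => u p.1 * v p.2

/-- An orthonormal family of vectors. -/
def OrthonormalFamily {k K : ℕ} (e : Fin k → (Fin K → ℂ)) : Prop :=
  ∀ i j, star (e i) ⬝ᵥ e j = if i = j then 1 else 0

section AuxLemmas

set_option linter.unusedSectionVars false

open Matrix

namespace Stmt13Aux

lemma dotProduct_sum {ι κ : Type*} [Fintype ι] (s : Finset κ) (v : ι → ℂ) (g : κ → ι → ℂ) :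
    v ⬝ᵥ (∑ i ∈ s, g i) = ∑ i ∈ s, v ⬝ᵥ g i := by
  simp [dotProduct, Finset.mul_sum, Finset.sum_apply]
  rw [Finset.sum_comm]

lemma sum_dotProduct {ι κ : Type*} [Fintype ι] (s : Finset κ) (v : ι → ℂ) (g : κ → ι → ℂ) :
    (∑ i ∈ s, g i) ⬝ᵥ v = ∑ i ∈ s, g i ⬝ᵥ v := by
  simp [dotProduct, Finset.sum_mul, Finset.sum_apply]
  rw [Finset.sum_comm]

lemma mulVec_vsum {ι κ : Type*} [Fintype ι] (s : Finset κ) (A : Matrix ι ι ℂ) (g : κ → ι → ℂ) :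
    A *ᵥ (∑ i ∈ s, g i) = ∑ i ∈ s, A *ᵥ g i := by
  ext j
  simp [Matrix.mulVec, dotProduct, Finset.mul_sum, Finset.sum_apply]
  rw [Finset.sum_comm]

lemma kron_mulVec {n m : ℕ} (A : Mat n) (B : Mat m) (u : Fin n → ℂ) (v : Fin m → ℂ) :
    (A ⊗ₖ B) *ᵥ vecKron u v = vecKron (A *ᵥ u) (B *ᵥ v) := by
  ext ⟨i, j⟩
  simp only [Matrix.mulVec, dotProduct, vecKron, Fintype.sum_prod_type,
    Matrix.kroneckerMap_apply, Finset.sum_mul_sum]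
  refine Finset.sum_congr rfl fun k _ => Finset.sum_congr rfl fun l _ => by ring

lemma dot_kron {n m : ℕ} (u u' : Fin n → ℂ) (v v' : Fin m → ℂ) :
    star (vecKron u v) ⬝ᵥ vecKron u' v' = (star u ⬝ᵥ u') * (star v ⬝ᵥ v') := by
  simp only [dotProduct, vecKron, Fintype.sum_prod_type, Pi.star_apply, Finset.sum_mul_sum,
    star_mul']
  refine Finset.sum_congr rfl fun k _ => Finset.sum_congr rfl fun l _ => by ring

/-- Completeness relation for an orthonormal basis, entrywise. -/
lemma onb_complete' {n : ℕ} {e : Fin n → (Fin n → ℂ)} (he : OrthonormalFamily e) (a b : Fin n) :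
    ∑ i, e i a * star (e i b) = if a = b then 1 else 0 := by
  set U : Mat n := Matrix.of fun i j => e j i with hU
  have h1 : Uᴴ * U = 1 := by
    ext i j
    have := he i j
    simpa [Matrix.mul_apply, Matrix.conjTranspose_apply, hU, dotProduct,
      Matrix.one_apply, mul_comm] using this
  have h2 : U * Uᴴ = 1 := mul_eq_one_comm.mp h1
  have := congrFun (congrFun h2 a) b
  simpa [Matrix.mul_apply, Matrix.conjTranspose_apply, hU, Matrix.one_apply] using this

lemma onb_complete {n : ℕ} {e : Fin n → (Fin n → ℂ)} (he : OrthonormalFamily e) :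
    ∑ i, Matrix.vecMulVec (e i) (star (e i)) = (1 : Mat n) := by
  ext a b
  simp only [Matrix.sum_apply, Matrix.vecMulVec_apply, Pi.star_apply, Matrix.one_apply]
  exact onb_complete' he a b

lemma onb_trace {n : ℕ} {e : Fin n → (Fin n → ℂ)} (he : OrthonormalFamily e) (a : Mat n) :
    ∑ i, star (e i) ⬝ᵥ (a *ᵥ e i) = Matrix.trace a := by
  have : ∀ i, star (e i) ⬝ᵥ (a *ᵥ e i) = ∑ k, ∑ l, a k l * (e i l * star (e i k)) := by
    intro i
    simp only [dotProduct, Matrix.mulVec, Pi.star_apply, Finset.mul_sum]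
    refine Finset.sum_congr rfl fun k _ => Finset.sum_congr rfl fun l _ => by ring
  rw [Finset.sum_congr rfl fun i _ => this i, Finset.sum_comm]
  have : ∀ k, ∑ i, ∑ l, a k l * (e i l * star (e i k)) = a k k := by
    intro k
    rw [Finset.sum_comm]
    have : ∀ l, ∑ i, a k l * (e i l * star (e i k)) = a k l * if l = k then 1 else 0 := by
      intro l
      rw [← Finset.mul_sum, onb_complete' he l k]
    rw [Finset.sum_congr rfl fun l _ => this l]
    simp
  rw [Finset.sum_congr rfl fun k _ => this k]
  rfl

lemma dot_schmidt {n : ℕ} {e f : Fin n → (Fin n → ℂ)} (he : OrthonormalFamily e)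
    (hf : OrthonormalFamily f) (g h : Fin n → ℂ) :
    star (∑ i, g i • vecKron (e i) (f i)) ⬝ᵥ (∑ j, h j • vecKron (e j) (f j)) =
      ∑ i, star (g i) * h i := by
  rw [star_sum, sum_dotProduct]
  refine Finset.sum_congr rfl fun i _ => ?_
  rw [dotProduct_sum, Finset.sum_eq_single i]
  · simp only [star_smul, smul_dotProduct, dotProduct_smul, dot_kron, he i i, hf i i]
    simp [smul_eq_mul]; ring
  · intro j _ hj
    have hij : ¬ (i = j) := fun h => hj h.symm
    simp only [star_smul, smul_dotProduct, dotProduct_smul, dot_kron, he i j, hf i j,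
      if_neg hij]
    simp
  · simp

/-- The vector-state functional. -/
def vF {ι : Type*} [Fintype ι] (w : ι → ℂ) : Matrix ι ι ℂ →ₗ[ℂ] ℂ where
  toFun x := star w ⬝ᵥ (x *ᵥ w)
  map_add' x y := by simp [Matrix.add_mulVec, dotProduct_add]
  map_smul' c x := by simp [Matrix.smul_mulVec, dotProduct_smul]

lemma vF_apply {ι : Type*} [Fintype ι] (w : ι → ℂ) (x) : vF w x = star w ⬝ᵥ (x *ᵥ w) := rfl

lemma vF_nonneg {ι : Type*} [Fintype ι] (w : ι → ℂ) (x : Matrix ι ι ℂ) : 0 ≤ vF w (xᴴ * x) := by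
  rw [vF_apply, ← Matrix.mulVec_mulVec, Matrix.dotProduct_mulVec, ← Matrix.star_mulVec]
  exact dotProduct_star_self_nonneg _

lemma ofReal_smul_nonneg {r : ℝ} (hr : 0 ≤ r) {z : ℂ} (hz : 0 ≤ z) : 0 ≤ (r : ℂ) * z := by
  rw [Complex.le_def] at hz ⊢
  obtain ⟨h1, h2⟩ := hz
  constructor
  · simp only [Complex.re_ofReal_mul, Complex.zero_re] at *
    exact mul_nonneg hr h1
  · simp only [Complex.im_ofReal_mul, Complex.zero_im] at *
    rw [← h2]; ring

/-- The canonical coupling associated to a pair of orthonormal bases. -/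
def cpl {n : ℕ} (e f : Fin n → (Fin n → ℂ)) : Mat2 n n →ₗ[ℂ] ℂ :=
  (Complex.ofReal (n : ℝ)⁻¹) • vF (∑ i, vecKron (e i) (f i))

lemma cpl_apply {n : ℕ} (e f : Fin n → (Fin n → ℂ)) (x : Mat2 n n) :
    cpl e f x = (Complex.ofReal (n : ℝ)⁻¹) * vF (∑ i, vecKron (e i) (f i)) x := rfl

lemma cpl_marg_left {n : ℕ} {e f : Fin n → (Fin n → ℂ)} (he : OrthonormalFamily e)
    (hf : OrthonormalFamily f) (a : Mat n) :
    cpl e f (a ⊗ₖ (1 : Mat n)) = ntr n a := by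
  rw [cpl_apply, vF_apply, mulVec_vsum]
  have h1 : ∀ j, (a ⊗ₖ (1 : Mat n)) *ᵥ vecKron (e j) (f j) = vecKron (a *ᵥ e j) (f j) := by
    intro j; rw [kron_mulVec, Matrix.one_mulVec]
  rw [Finset.sum_congr rfl fun j _ => h1 j, star_sum, sum_dotProduct]
  have h2 : ∀ i, star (vecKron (e i) (f i)) ⬝ᵥ (∑ j, vecKron (a *ᵥ e j) (f j)) =
      star (e i) ⬝ᵥ (a *ᵥ e i) := by
    intro i
    rw [dotProduct_sum, Finset.sum_eq_single i]
    · rw [dot_kron, hf i i]; simp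
    · intro j _ hj
      have hij : ¬ (i = j) := fun h => hj h.symm
      rw [dot_kron, hf i j, if_neg hij, mul_zero]
    · simp
  rw [Finset.sum_congr rfl fun i _ => h2 i, onb_trace he a]
  simp [ntr, Matrix.traceLinearMap]

lemma cpl_marg_right {n : ℕ} {e f : Fin n → (Fin n → ℂ)} (he : OrthonormalFamily e)
    (hf : OrthonormalFamily f) (b : Mat n) :
    cpl e f ((1 : Mat n) ⊗ₖ b) = ntr n b := by
  rw [cpl_apply, vF_apply, mulVec_vsum]
  have h1 : ∀ j, ((1 : Mat n) ⊗ₖ b) *ᵥ vecKron (e j) (f j) = vecKron (e j) (b *ᵥ f j) := by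
    intro j; rw [kron_mulVec, Matrix.one_mulVec]
  rw [Finset.sum_congr rfl fun j _ => h1 j, star_sum, sum_dotProduct]
  have h2 : ∀ i, star (vecKron (e i) (f i)) ⬝ᵥ (∑ j, vecKron (e j) (b *ᵥ f j)) =
      star (f i) ⬝ᵥ (b *ᵥ f i) := by
    intro i
    rw [dotProduct_sum, Finset.sum_eq_single i]
    · rw [dot_kron, he i i]; simp
    · intro j _ hj
      have hij : ¬ (i = j) := fun h => hj h.symm
      rw [dot_kron, he i j, if_neg hij, zero_mul]
    · simp
  rw [Finset.sum_congr rfl fun i _ => h2 i, onb_trace hf b]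
  simp [ntr, Matrix.traceLinearMap]

lemma cpl_state {n : ℕ} (hn : 0 < n) {e f : Fin n → (Fin n → ℂ)} (he : OrthonormalFamily e)
    (hf : OrthonormalFamily f) : IsState (cpl e f) := by
  constructor
  · have := cpl_marg_left he hf (1 : Mat n)
    have h1 : ntr n (1 : Mat n) = 1 := by
      simp [ntr, Matrix.traceLinearMap]
      rw [inv_mul_cancel₀]
      exact_mod_cast hn.ne'
    rwa [Matrix.one_kronecker_one, h1] at this
  · intro x
    rw [cpl_apply]
    exact ofReal_smul_nonneg (inv_nonneg.mpr (Nat.cast_nonneg n)) (vF_nonneg _ x)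

lemma state_rankone_nonneg {ι : Type*} [Fintype ι] [DecidableEq ι] [Nonempty ι]
    {ω : Matrix ι ι ℂ →ₗ[ℂ] ℂ} (hω : IsState ω) (v : ι → ℂ) :
    0 ≤ (ω (Matrix.vecMulVec v (star v))).re ∧ (ω (Matrix.vecMulVec v (star v))).im = 0 := by
  obtain ⟨i₀⟩ := ‹Nonempty ι›
  set x : Matrix ι ι ℂ := Matrix.of fun i j => if i = i₀ then star (v j) else 0 with hx
  have h : xᴴ * x = Matrix.vecMulVec v (star v) := by
    ext i j
    simp only [Matrix.mul_apply, Matrix.conjTranspose_apply, hx, Matrix.of_apply,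
      Matrix.vecMulVec_apply, Pi.star_apply]
    simp [apply_ite, ite_mul, mul_ite, Finset.sum_ite_eq']
  have h2 := hω.2 x
  rw [h, Complex.le_def] at h2
  exact ⟨by simpa using h2.1, by simpa using h2.2.symm⟩

lemma vecMulVec_mul {ι : Type*} [Fintype ι] (u v u' v' : ι → ℂ) :
    Matrix.vecMulVec u v * Matrix.vecMulVec u' v' = (v ⬝ᵥ u') • Matrix.vecMulVec u v' := by
  ext i j
  simp only [Matrix.mul_apply, Matrix.vecMulVec_apply, Matrix.smul_apply, dotProduct,
    smul_eq_mul, Finset.sum_mul, Finset.mul_sum]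
  refine Finset.sum_congr rfl fun k _ => by ring

lemma vecMulVec_conjTranspose {ι : Type*} [Fintype ι] (v : ι → ℂ) :
    (Matrix.vecMulVec v (star v))ᴴ = Matrix.vecMulVec v (star v) := by
  ext i j
  simp [Matrix.conjTranspose_apply, Matrix.vecMulVec_apply, mul_comm]

lemma state_proj_le_one {ι : Type*} [Fintype ι] [DecidableEq ι]
    {ω : Matrix ι ι ℂ →ₗ[ℂ] ℂ} (hω : IsState ω) {v : ι → ℂ} (hv : star v ⬝ᵥ v = 1) :
    (ω (Matrix.vecMulVec v (star v))).re ≤ 1 := by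
  set P := Matrix.vecMulVec v (star v) with hP
  have hPP : P * P = P := by
    rw [hP, vecMulVec_mul, hv, one_smul]
  have hkey : (1 - P)ᴴ * (1 - P) = 1 - P := by
    rw [Matrix.conjTranspose_sub, Matrix.conjTranspose_one, hP, vecMulVec_conjTranspose,
      Matrix.sub_mul, Matrix.mul_sub, Matrix.mul_sub, ← hP, hPP]
    simp only [Matrix.one_mul, Matrix.mul_one]
    abel
  have h2 := hω.2 (1 - P)
  rw [hkey, map_sub, hω.1, Complex.le_def] at h2
  have := h2.1
  simp only [Complex.zero_re, Complex.sub_re, Complex.one_re] at this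
  linarith

lemma vecMulVec_mulVec {ι : Type*} [Fintype ι] (u v w : ι → ℂ) :
    Matrix.vecMulVec u v *ᵥ w = (v ⬝ᵥ w) • u := by
  ext i
  simp only [Matrix.mulVec, Matrix.vecMulVec_apply, dotProduct, Pi.smul_apply, smul_eq_mul,
    Finset.sum_mul]
  refine Finset.sum_congr rfl fun k _ => by ring

lemma trace_vecMulVec {ι : Type*} [Fintype ι] (u v : ι → ℂ) :
    Matrix.trace (Matrix.vecMulVec u v) = v ⬝ᵥ u := by
  simp [Matrix.trace, Matrix.vecMulVec_apply, dotProduct, mul_comm]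

lemma key_identity (lam : Fin 2 → ℝ) (e f : Fin 2 → (Fin 2 → ℂ))
    (he : OrthonormalFamily e) (hf : OrthonormalFamily f) :
    ((lam 0 : ℂ) * ((lam 0 : ℂ) + (lam 1 : ℂ))) •
        (Matrix.vecMulVec (e 0) (star (e 0)) ⊗ₖ (1 : Mat 2)) +
      ((lam 1 : ℂ) * ((lam 0 : ℂ) + (lam 1 : ℂ))) •
        ((1 : Mat 2) ⊗ₖ Matrix.vecMulVec (f 1) (star (f 1))) =
    Matrix.vecMulVec (∑ i, (lam i : ℂ) • vecKron (e i) (f i))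
        (star (∑ i, (lam i : ℂ) • vecKron (e i) (f i))) +
      ((lam 0 : ℂ) * (lam 1 : ℂ)) •
        Matrix.vecMulVec (vecKron (e 0) (f 0) - vecKron (e 1) (f 1))
          (star (vecKron (e 0) (f 0) - vecKron (e 1) (f 1))) +
      (((lam 0 : ℂ) + (lam 1 : ℂ)) ^ 2) •
        Matrix.vecMulVec (vecKron (e 0) (f 1)) (star (vecKron (e 0) (f 1))) := by
  nth_rewrite 1 [← onb_complete hf]
  nth_rewrite 1 [← onb_complete he]
  ext ⟨i, k⟩ ⟨j, l⟩
  simp only [Matrix.add_apply, Matrix.smul_apply, Matrix.kroneckerMap_apply, Matrix.sum_apply,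
    Matrix.vecMulVec_apply, Pi.star_apply, Pi.sub_apply, Pi.smul_apply, Finset.sum_apply,
    Fin.sum_univ_two, vecKron, smul_eq_mul, star_add, star_sub, star_mul', star_smul,
    Pi.add_apply, Complex.star_def, map_add, _root_.map_mul, map_sub, Complex.conj_ofReal]
  ring

end Stmt13Aux

end AuxLemmas

/-- Proposition 3.6: if `ξ = ∑ᵢ λᵢ eᵢ ⊗ fᵢ` is a Schmidt decomposition of the unit vector `ξ`,
then `α(E_ξ) ≥ (1/n)(∑ᵢ λᵢ)² ≥ 1/n`, with equality in the first inequality when `n = 2`. -/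
theorem stmt13 {n : ℕ} (hn : 0 < n)
    (ξ : Fin n × Fin n → ℂ) (hξ : star ξ ⬝ᵥ ξ = 1)
    (lam : Fin n → ℝ) (hlam : ∀ i, 0 ≤ lam i)
    (e f : Fin n → (Fin n → ℂ))
    (he : OrthonormalFamily e) (hf : OrthonormalFamily f)
    (hdecomp : ξ = ∑ i, (lam i : ℂ) • vecKron (e i) (f i)) :
    (1 / n : ℝ) * (∑ i, lam i) ^ 2 ≤
        alpha (ntr n) (ntr n) (Matrix.vecMulVec ξ (star ξ)) ∧
    (1 / n : ℝ) ≤ (1 / n : ℝ) * (∑ i, lam i) ^ 2 ∧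
    (n = 2 →
      alpha (ntr n) (ntr n) (Matrix.vecMulVec ξ (star ξ)) =
        (1 / n : ℝ) * (∑ i, lam i) ^ 2) := by
  classical
  open Stmt13Aux in
  set T := Matrix.vecMulVec ξ (star ξ) with hT
  set S := {r : ℝ | ∃ σ, IsCoupling (ntr n) (ntr n) σ ∧ (σ T).re = r} with hS
  have halpha : alpha (ntr n) (ntr n) T = sSup S := rfl
  -- the norm condition in terms of lam
  have hsumsq : ∑ i, lam i ^ 2 = 1 := by
    have h1 : star ξ ⬝ᵥ ξ = ∑ i, star ((lam i : ℂ)) * (lam i : ℂ) := by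
      rw [hdecomp]; exact Stmt13Aux.dot_schmidt he hf _ _
    rw [hξ] at h1
    have h2 : ∑ i, star ((lam i : ℂ)) * (lam i : ℂ) = ((∑ i, lam i ^ 2 : ℝ) : ℂ) := by
      push_cast
      refine Finset.sum_congr rfl fun i _ => ?_
      rw [Complex.star_def, Complex.conj_ofReal]; ring
    have h3 : ((∑ i, lam i ^ 2 : ℝ) : ℂ) = 1 := by rw [← h2, ← h1]
    exact_mod_cast h3
  -- the canonical coupling and its value
  have hcoup : IsCoupling (ntr n) (ntr n) (Stmt13Aux.cpl e f) :=
    ⟨Stmt13Aux.cpl_state hn he hf, Stmt13Aux.cpl_marg_left he hf,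
      Stmt13Aux.cpl_marg_right he hf⟩
  have hw : (∑ i, vecKron (e i) (f i)) = ∑ j, (fun _ : Fin n => (1:ℂ)) j • vecKron (e j) (f j) := by
    simp
  have hval : ((Stmt13Aux.cpl e f) T).re = (1 / n : ℝ) * (∑ i, lam i) ^ 2 := by
    rw [Stmt13Aux.cpl_apply, Stmt13Aux.vF_apply, hT, Stmt13Aux.vecMulVec_mulVec]
    rw [dotProduct_smul, smul_eq_mul]
    have hd1 : star ξ ⬝ᵥ (∑ i, vecKron (e i) (f i)) = ((∑ i, lam i : ℝ) : ℂ) := by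
      rw [hdecomp, hw, Stmt13Aux.dot_schmidt he hf]
      push_cast
      refine Finset.sum_congr rfl fun i _ => ?_
      rw [Complex.star_def, Complex.conj_ofReal]; ring
    have hd2 : star (∑ i, vecKron (e i) (f i)) ⬝ᵥ ξ = ((∑ i, lam i : ℝ) : ℂ) := by
      rw [hdecomp, hw, Stmt13Aux.dot_schmidt he hf]
      push_cast; simp
    rw [hd1, hd2]
    have : (Complex.ofReal (n : ℝ)⁻¹) * (((∑ i, lam i : ℝ) : ℂ) * ((∑ i, lam i : ℝ) : ℂ)) =
        (((n : ℝ)⁻¹ * (∑ i, lam i) ^ 2 : ℝ) : ℂ) := by push_cast; ring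
    rw [this, Complex.ofReal_re, one_div]
  have hmem : (1 / n : ℝ) * (∑ i, lam i) ^ 2 ∈ S := ⟨Stmt13Aux.cpl e f, hcoup, hval⟩
  have hbdd : BddAbove S := by
    refine ⟨1, fun r hr => ?_⟩
    obtain ⟨σ, hσ, hσr⟩ := hr
    rw [← hσr, hT]
    exact Stmt13Aux.state_proj_le_one hσ.1 hξ
  refine ⟨halpha ▸ le_csSup hbdd hmem, ?_, ?_⟩
  · have h1 : (1:ℝ) ≤ (∑ i, lam i) ^ 2 := by
      calc (1:ℝ) = ∑ i, lam i ^ 2 := hsumsq.symm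
        _ ≤ (∑ i, lam i) ^ 2 :=
          Finset.sum_sq_le_sq_sum_of_nonneg (fun i _ => hlam i)
    have h2 : (0:ℝ) ≤ (1 / n : ℝ) := by positivity
    nlinarith
  · intro h2
    subst h2
    rw [halpha]
    refine le_antisymm (csSup_le ⟨_, hmem⟩ ?_) (le_csSup hbdd hmem)
    rintro r ⟨σ, ⟨hst, hm1, hm2⟩, rfl⟩
    -- upper bound via the key identity
    have hid := Stmt13Aux.key_identity lam e f he hf
    have happ := congrArg σ hid
    simp only [map_add, map_smul, smul_eq_mul] at happ
    rw [hm1, hm2] at happ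
    have hE : ntr 2 (Matrix.vecMulVec (e 0) (star (e 0))) = ((2:ℝ)⁻¹ : ℂ) := by
      simp only [ntr, LinearMap.smul_apply, Matrix.traceLinearMap_apply, smul_eq_mul,
        Stmt13Aux.trace_vecMulVec]
      rw [he 0 0]
      norm_num
    have hF : ntr 2 (Matrix.vecMulVec (f 1) (star (f 1))) = ((2:ℝ)⁻¹ : ℂ) := by
      simp only [ntr, LinearMap.smul_apply, Matrix.traceLinearMap_apply, smul_eq_mul,
        Stmt13Aux.trace_vecMulVec]
      rw [hf 1 1]
      norm_num
    rw [hE, hF, ← hdecomp] at happ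
    have hz1 := Stmt13Aux.state_rankone_nonneg hst
        (vecKron (e 0) (f 0) - vecKron (e 1) (f 1))
    have hz2 := Stmt13Aux.state_rankone_nonneg hst (vecKron (e 0) (f 1))
    have hre := congrArg Complex.re happ
    have hc1 : ((lam 0 : ℂ) * ((lam 0 : ℂ) + (lam 1 : ℂ))) * ((2:ℝ)⁻¹ : ℂ) =
        ((lam 0 * (lam 0 + lam 1) * 2⁻¹ : ℝ) : ℂ) := by push_cast; ring
    have hc2 : ((lam 1 : ℂ) * ((lam 0 : ℂ) + (lam 1 : ℂ))) * ((2:ℝ)⁻¹ : ℂ) =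
        ((lam 1 * (lam 0 + lam 1) * 2⁻¹ : ℝ) : ℂ) := by push_cast; ring
    have hc3 : ((lam 0 : ℂ) * (lam 1 : ℂ)) = ((lam 0 * lam 1 : ℝ) : ℂ) := by push_cast; ring
    have hc4 : (((lam 0 : ℂ) + (lam 1 : ℂ)) ^ 2) = (((lam 0 + lam 1) ^ 2 : ℝ) : ℂ) := by
      push_cast; ring
    rw [hc1, hc2, hc3, hc4] at happ
    have hre := congrArg Complex.re happ
    simp only [Complex.add_re, Complex.ofReal_re, Complex.re_ofReal_mul] at hre
    have hnn1 : 0 ≤ (lam 0 * lam 1) *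
        (σ (Matrix.vecMulVec (vecKron (e 0) (f 0) - vecKron (e 1) (f 1))
          (star (vecKron (e 0) (f 0) - vecKron (e 1) (f 1))))).re :=
      mul_nonneg (mul_nonneg (hlam 0) (hlam 1)) hz1.1
    have hnn2 : 0 ≤ ((lam 0 + lam 1) ^ 2) *
        (σ (Matrix.vecMulVec (vecKron (e 0) (f 1)) (star (vecKron (e 0) (f 1))))).re :=
      mul_nonneg (by positivity) hz2.1
    have hfin : (σ T).re ≤ (1/2 : ℝ) * (lam 0 + lam 1) ^ 2 := by
      rw [hT]
      nlinarith [hre]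
    calc (σ T).re ≤ (1/2 : ℝ) * (lam 0 + lam 1) ^ 2 := hfin
      _ = (1 / (2:ℕ) : ℝ) * (∑ i, lam i) ^ 2 := by
          rw [Fin.sum_univ_two]; norm_num

end
end
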